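/- arXiv:1801.02012 — 9 statements merged into one kernel-verified Lean document; each statement's English description precedes it below -/
import Mathlib

section
/- For any subset K of V₀, the intersection of Λ_K with the interior of the simplex Δ_S is homeomorphic (in fact diffeomorphic via the exp/log maps) to the orthogonal complement of the linear span of K inside V₀; in particular it is homeomorphic to an open disk of dimension |S| - 1 - dim(span K). -/
/-!
Taking logarithms turns the defining equation of `λ_κ` at a strictly positive `μ` into the
linear equation `∑ κ_s log μ_s = 0`; when `κ ∈ V₀` this equation does not see the centering in
the centered logarithm, which is a homeomorphism `int(Δ_S) → V₀` with inverse the softmax map.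
Hence `Λ_K ∩ int(Δ_S)` is homeomorphic to `V₀ ∩ K^⊥`, the dot-product annihilator of
`K ∪ {1}`. Since `span K ⊆ V₀` does not contain `1`, this subspace has dimension
`|S| - 1 - dim (span K)`, and every finite-dimensional real vector space is homeomorphic to
an open ball.
-/

open scoped BigOperators

noncomputable section

/-- The simplex of probability distributions on `S`. -/
def Delta (S : Type*) [Fintype S] : Set (S → ℝ) :=
  {μ | (∀ s, 0 ≤ μ s) ∧ ∑ s, μ s = 1}

/-- The (relative) interior of the simplex: strictly positive distributions. -/
def intDelta (S : Type*) [Fintype S] : Set (S → ℝ) :=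
  {μ | (∀ s, 0 < μ s) ∧ ∑ s, μ s = 1}

/-- The hyperplane of vectors with coordinate sum zero. -/
def V0 (S : Type*) [Fintype S] : Set (S → ℝ) :=
  {v | ∑ s, v s = 0}

/-- The set `λ_κ` of distributions satisfying the centrality equation of `κ`
(real powers, `rpow`, so `0 ^ x = 0` for `x > 0`). -/
def lam {S : Type*} [Fintype S] (κ : S → ℝ) : Set (S → ℝ) :=
  {μ ∈ Delta S |
    ∏ s ∈ Finset.univ.filter (fun s => 0 < κ s), (μ s) ^ (κ s) =
    ∏ s ∈ Finset.univ.filter (fun s => κ s < 0), (μ s) ^ (-(κ s))}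

/-- `Λ_K`, the intersection of the `λ_κ` over `κ ∈ K`. -/
def Lam {S : Type*} [Fintype S] (K : Set (S → ℝ)) : Set (S → ℝ) :=
  ⋂ κ ∈ K, lam κ

open Finset Module Matrix

lemma log_prod_rpow {ι : Type*} {μ : ι → ℝ} (hμ : ∀ s, 0 < μ s) (t : Finset ι) (c : ι → ℝ) :
    Real.log (∏ s ∈ t, μ s ^ c s) = ∑ s ∈ t, c s * Real.log (μ s) := by
  rw [Real.log_prod fun s _ => (Real.rpow_pos_of_pos (hμ s) _).ne']
  exact sum_congr rfl fun s _ => Real.log_rpow (hμ s) _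

section CenteredLog

variable {S : Type*} [Fintype S]

def softmax (v : S → ℝ) (s : S) : ℝ :=
  Real.exp (v s) / ∑ t, Real.exp (v t)

def centeredLog (μ : S → ℝ) (s : S) : ℝ :=
  Real.log (μ s) - (∑ t, Real.log (μ t)) / Fintype.card S

lemma sum_mul_sub_const {κ : S → ℝ} (hκ : ∑ s, κ s = 0) (f : S → ℝ) (c : ℝ) :
    ∑ s, κ s * (f s - c) = ∑ s, κ s * f s := by
  simp only [mul_sub, sum_sub_distrib, ← sum_mul, hκ, zero_mul, sub_zero]

lemma sum_mul_centeredLog {κ : S → ℝ} (hκ : ∑ s, κ s = 0) (μ : S → ℝ) :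
    ∑ s, κ s * centeredLog μ s = ∑ s, κ s * Real.log (μ s) :=
  sum_mul_sub_const hκ _ _

lemma continuousOn_centeredLog :
    ContinuousOn (centeredLog : (S → ℝ) → S → ℝ) {μ | ∀ s, 0 < μ s} := by
  have hlog (s : S) : ContinuousOn (fun μ : S → ℝ => Real.log (μ s)) {μ | ∀ s, 0 < μ s} :=
    (continuous_apply s).continuousOn.log fun μ hμ => (hμ s).ne'
  exact continuousOn_pi.2 fun s =>
    (hlog s).sub ((continuousOn_finsetSum _ fun t _ => hlog t).div_const _)

lemma softmax_centeredLog {μ : S → ℝ} (hμ : μ ∈ intDelta S) : softmax (centeredLog μ) = μ := by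
  set c := (∑ t, Real.log (μ t)) / Fintype.card S
  have hexp (t : S) : Real.exp (centeredLog μ t) = μ t * Real.exp (-c) := by
    rw [centeredLog, sub_eq_add_neg, Real.exp_add, Real.exp_log (hμ.1 t)]
  funext s
  rw [softmax, hexp, Fintype.sum_congr _ _ hexp, ← sum_mul, hμ.2, one_mul,
    mul_div_cancel_right₀ _ (Real.exp_pos _).ne']

variable [Nonempty S]

lemma sum_centeredLog (μ : S → ℝ) : ∑ s, centeredLog μ s = 0 := by
  have : (Fintype.card S : ℝ) ≠ 0 := Nat.cast_ne_zero.2 Fintype.card_ne_zero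
  simp only [centeredLog, sum_sub_distrib, sum_const, card_univ, nsmul_eq_mul]
  field_simp
  ring

lemma sum_exp_pos (v : S → ℝ) : 0 < ∑ t, Real.exp (v t) :=
  sum_pos (fun _ _ => Real.exp_pos _) univ_nonempty

lemma continuous_softmax : Continuous (softmax : (S → ℝ) → S → ℝ) :=
  continuous_pi fun s => (continuous_apply s).rexp.div
    (continuous_finsetSum _ fun t _ => (continuous_apply t).rexp) fun v => (sum_exp_pos v).ne'

lemma softmax_pos (v : S → ℝ) (s : S) : 0 < softmax v s :=
  div_pos (Real.exp_pos _) (sum_exp_pos v)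

lemma sum_softmax (v : S → ℝ) : ∑ s, softmax v s = 1 := by
  simp only [softmax, ← sum_div, div_self (sum_exp_pos v).ne']

lemma softmax_mem_intDelta (v : S → ℝ) : softmax v ∈ intDelta S :=
  ⟨softmax_pos v, sum_softmax v⟩

lemma log_softmax (v : S → ℝ) (s : S) :
    Real.log (softmax v s) = v s - Real.log (∑ t, Real.exp (v t)) := by
  rw [softmax, Real.log_div (Real.exp_pos _).ne' (sum_exp_pos v).ne', Real.log_exp]

lemma sum_mul_log_softmax {κ : S → ℝ} (hκ : ∑ s, κ s = 0) (v : S → ℝ) :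
    ∑ s, κ s * Real.log (softmax v s) = ∑ s, κ s * v s := by
  simp only [log_softmax]
  exact sum_mul_sub_const hκ _ _

lemma centeredLog_softmax {v : S → ℝ} (hv : v ∈ V0 S) : centeredLog (softmax v) = v := by
  have : (Fintype.card S : ℝ) ≠ 0 := Nat.cast_ne_zero.2 Fintype.card_ne_zero
  funext s
  simp only [centeredLog, log_softmax, sum_sub_distrib, hv.out, sum_const, card_univ, nsmul_eq_mul]
  field_simp
  ring

end CenteredLog

section Lam

variable {S : Type*} [Fintype S]

lemma sum_mul_eq_sum_pos_sub_sum_neg (κ f : S → ℝ) :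
    ∑ s, κ s * f s = ∑ s ∈ univ.filter (0 < κ ·), κ s * f s
      - ∑ s ∈ univ.filter (κ · < 0), -κ s * f s := by
  rw [sum_filter, sum_filter, ← sum_sub_distrib]
  refine sum_congr rfl fun s _ => ?_
  rcases lt_trichotomy (κ s) 0 with h | h | h
  · simp [h, h.not_gt]
  · simp [h]
  · simp [h, h.not_gt]

lemma mem_lam_iff {κ μ : S → ℝ} (hμ : μ ∈ intDelta S) :
    μ ∈ lam κ ↔ ∑ s, κ s * Real.log (μ s) = 0 := by
  have hΔ : μ ∈ Delta S := ⟨fun s => (hμ.1 s).le, hμ.2⟩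
  have hpos (t : Finset S) (c : S → ℝ) : 0 < ∏ s ∈ t, μ s ^ c s :=
    prod_pos fun s _ => Real.rpow_pos_of_pos (hμ.1 s) _
  rw [sum_mul_eq_sum_pos_sub_sum_neg, ← log_prod_rpow hμ.1, ← log_prod_rpow hμ.1, sub_eq_zero,
    Real.log_injOn_pos.eq_iff (hpos _ _) (hpos _ _)]
  exact and_iff_right hΔ

lemma mem_Lam_iff {K : Set (S → ℝ)} {μ : S → ℝ} (hμ : μ ∈ intDelta S) :
    μ ∈ Lam K ↔ ∀ κ ∈ K, ∑ s, κ s * Real.log (μ s) = 0 := by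
  simp only [Lam, Set.mem_iInter₂, mem_lam_iff hμ]

def centeredLogHomeomorph [Nonempty S] (K : Set (S → ℝ)) (hK : K ⊆ V0 S) :
    ↥(Lam K ∩ intDelta S) ≃ₜ ↥{v : S → ℝ | v ∈ V0 S ∧ ∀ κ ∈ K, ∑ s, κ s * v s = 0} where
  toFun μ := ⟨centeredLog μ, sum_centeredLog μ.1, fun κ hκ => by
    rw [sum_mul_centeredLog (hK hκ)]
    exact (mem_Lam_iff μ.2.2).1 μ.2.1 κ hκ⟩
  invFun v := ⟨softmax v, (mem_Lam_iff (softmax_mem_intDelta v.1)).2 fun κ hκ => by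
    rw [sum_mul_log_softmax (hK hκ)]
    exact v.2.2 κ hκ, softmax_mem_intDelta v.1⟩
  left_inv μ := Subtype.ext (softmax_centeredLog μ.2.2)
  right_inv v := Subtype.ext (centeredLog_softmax v.2.1)
  continuous_toFun := (continuousOn_centeredLog.comp_continuous continuous_subtype_val
    fun μ => μ.2.2.1).subtype_mk _
  continuous_invFun := (continuous_softmax.comp continuous_subtype_val).subtype_mk _

end Lam

section DotAnnihilator

variable {R S : Type*} [Field R] [Fintype S] [DecidableEq S]

def dotAnnihilator (T : Set (S → R)) : Submodule R (S → R) :=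
  (Submodule.span R (dotProductEquiv R S '' T)).dualCoannihilator

lemma mem_dotAnnihilator {T : Set (S → R)} {v : S → R} :
    v ∈ dotAnnihilator T ↔ ∀ κ ∈ T, κ ⬝ᵥ v = 0 := by
  rw [← SetLike.mem_coe, dotAnnihilator, Submodule.coe_dualCoannihilator_span]
  simp only [Set.mem_ofPred_eq, Set.forall_mem_image, dotProductEquiv_apply_apply]

lemma finrank_dotAnnihilator (T : Set (S → R)) :
    finrank R (dotAnnihilator T) = Fintype.card S - finrank R (Submodule.span R T) := by
  have h := Subspace.finrank_add_finrank_dualCoannihilator_eq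
    (Submodule.span R (dotProductEquiv R S '' T))
  have hspan : finrank R (Submodule.span R (dotProductEquiv R S '' T)) =
      finrank R (Submodule.span R T) := by
    rw [← LinearEquiv.coe_coe, ← Submodule.map_span, LinearEquiv.finrank_map_eq]
  rw [hspan, finrank_fintype_fun_eq_card] at h
  rw [dotAnnihilator]
  omega

end DotAnnihilator

section SimplexTangent

variable {S : Type*} [Fintype S] [DecidableEq S]

lemma coe_dotAnnihilator_insert_one (K : Set (S → ℝ)) :
    (dotAnnihilator (insert 1 K) : Set (S → ℝ)) =
      {v : S → ℝ | v ∈ V0 S ∧ ∀ κ ∈ K, ∑ s, κ s * v s = 0} := by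
  ext v
  simp only [SetLike.mem_coe, mem_dotAnnihilator, Set.forall_mem_insert, one_dotProduct]
  rfl

variable [Nonempty S]

lemma one_notMem_span_of_subset_V0 {K : Set (S → ℝ)} (hK : K ⊆ V0 S) :
    (1 : S → ℝ) ∉ Submodule.span ℝ K := by
  have hle : Submodule.span ℝ K ≤ dotAnnihilator {1} :=
    Submodule.span_le.2 fun κ hκ => mem_dotAnnihilator.2 fun _ h1 => by
      rw [Set.mem_singleton_iff.1 h1, one_dotProduct]
      exact hK hκ
  intro h1
  have := mem_dotAnnihilator.1 (hle h1) 1 rfl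
  rw [one_dotProduct_one, Nat.cast_eq_zero] at this
  exact Fintype.card_ne_zero this

lemma finrank_dotAnnihilator_insert_one {K : Set (S → ℝ)} (hK : K ⊆ V0 S) :
    finrank ℝ (dotAnnihilator (insert 1 K)) =
      Fintype.card S - 1 - finrank ℝ (Submodule.span ℝ K) := by
  rw [finrank_dotAnnihilator, Submodule.span_insert, sup_comm,
    Submodule.finrank_sup_span_singleton (one_notMem_span_of_subset_V0 hK)]
  omega

end SimplexTangent

lemma nonempty_homeomorph_unitBall (F : Type*) [NormedAddCommGroup F] [NormedSpace ℝ F]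
    [FiniteDimensional ℝ F] {n : ℕ} (hn : finrank ℝ F = n) :
    Nonempty (F ≃ₜ Metric.ball (0 : EuclideanSpace ℝ (Fin n)) 1) :=
  ⟨(ContinuousLinearEquiv.ofFinrankEq (by rw [hn, finrank_euclideanSpace_fin])).toHomeomorph.trans
    Homeomorph.unitBall⟩

/-- for any `K ⊆ V₀`, the set `Λ_K ∩ int(Δ_S)` is homeomorphic to the
orthogonal complement of the linear span of `K` inside `V₀`; in particular it is
homeomorphic to an open disk of dimension `|S| - 1 - dim (span K)`. -/
theorem LamK_inter_intDelta_homeo (S : Type*) [Fintype S] [Nonempty S]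
    (K : Set (S → ℝ)) (hK : K ⊆ V0 S) :
    Nonempty (↥(Lam K ∩ intDelta S) ≃ₜ
      ↥{v : S → ℝ | v ∈ V0 S ∧ ∀ κ ∈ K, ∑ s, κ s * v s = 0}) ∧
    Nonempty (↥(Lam K ∩ intDelta S) ≃ₜ
      ↥(Metric.ball (0 : EuclideanSpace ℝ
          (Fin (Fintype.card S - 1 - Module.finrank ℝ (Submodule.span ℝ K)))) 1)) := by
  classical
  let e := centeredLogHomeomorph K hK
  obtain ⟨ball⟩ := nonempty_homeomorph_unitBall (dotAnnihilator (insert (1 : S → ℝ) K))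
    (finrank_dotAnnihilator_insert_one hK)
  exact ⟨⟨e⟩, ⟨e.trans ((Homeomorph.setCongr (coe_dotAnnihilator_insert_one K).symm).trans ball)⟩⟩
end
end

section
/- If K is a subgroup of V₀ consisting of vectors with integer coordinates and V_K is its real linear span, then Λ_K = Λ_{V_K}. -/
open scoped BigOperators

noncomputable section

section Aux
set_option linter.unusedSectionVars false
set_option maxHeartbeats 1000000
open Finset

variable {S : Type*} [Fintype S]


variable {S : Type*} [Fintype S]

/-- Rational subspace intersected with coordinate hyperplanes is spanned by its points there. -/
lemma span_rat_coord_inter (M : Submodule ℚ (S → ℝ))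
    (hM : ∀ x ∈ M, ∀ s, ∃ q : ℚ, x s = (q : ℝ)) (J : Finset S) :
    ∀ v ∈ Submodule.span ℝ (M : Set (S → ℝ)), (∀ s ∈ J, v s = 0) →
      v ∈ Submodule.span ℝ {x | x ∈ M ∧ ∀ s ∈ J, x s = 0} := by
  classical
  induction J using Finset.induction_on with
  | empty =>
      intro v hv _
      refine Submodule.span_mono ?_ hv
      intro x hx; exact ⟨hx, by simp⟩
  | @insert a J ha IH =>
      intro v hv hvJ
      have hvJ' : ∀ s ∈ J, v s = 0 := fun s hs => hvJ s (mem_insert_of_mem hs)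
      have hva : v a = 0 := hvJ a (mem_insert_self a J)
      have hW : v ∈ Submodule.span ℝ {x | x ∈ M ∧ ∀ s ∈ J, x s = 0} := IH v hv hvJ'
      by_cases hex : ∃ w, (w ∈ M ∧ ∀ t ∈ J, w t = 0) ∧ w a ≠ 0
      · obtain ⟨w₀, ⟨hw₀M, hw₀J⟩, hw₀a⟩ := hex
        set φ : (S → ℝ) →ₗ[ℝ] (S → ℝ) :=
          LinearMap.id - (LinearMap.proj a).smulRight ((w₀ a)⁻¹ • w₀) with hφ
        have hφx : ∀ x : S → ℝ, φ x = x - (x a * (w₀ a)⁻¹) • w₀ := by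
          intro x
          simp [hφ, LinearMap.smulRight, smul_smul]
        have hmap : Submodule.map φ (Submodule.span ℝ {x | x ∈ M ∧ ∀ s ∈ J, x s = 0}) ≤
            Submodule.span ℝ {x | x ∈ M ∧ ∀ s ∈ insert a J, x s = 0} := by
          rw [Submodule.map_span]
          refine Submodule.span_le.mpr ?_
          rintro y ⟨x, ⟨hxM, hxJ⟩, rfl⟩
          refine Submodule.subset_span ?_
          obtain ⟨qx, hqx⟩ := hM x hxM a
          obtain ⟨q₀, hq₀⟩ := hM w₀ hw₀M a
          have hq₀ne : (q₀ : ℚ) ≠ 0 := by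
            intro h; apply hw₀a; rw [hq₀, h]; simp
          constructor
          · rw [hφx]
            have hco : (x a * (w₀ a)⁻¹) • w₀ = ((qx / q₀ : ℚ) : ℝ) • w₀ := by
              rw [hqx, hq₀]; push_cast; ring_nf
            rw [hco]
            have : ((qx / q₀ : ℚ) : ℝ) • w₀ = (qx / q₀ : ℚ) • w₀ := rfl
            rw [this]
            exact M.sub_mem hxM (M.smul_mem _ hw₀M)
          · intro t ht
            rcases mem_insert.mp ht with h | h
            · subst h
              rw [hφx]
              simp only [Pi.sub_apply, Pi.smul_apply, smul_eq_mul]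
              field_simp
              simp
            · rw [hφx]
              simp [hxJ t h, hw₀J t h]
        have : φ v = v := by rw [hφx, hva]; simp
        rw [← this]
        exact hmap (Submodule.mem_map_of_mem hW)
      · push_neg at hex
        refine Submodule.span_mono ?_ hW
        rintro x ⟨hxM, hxJ⟩
        refine ⟨hxM, ?_⟩
        intro t ht
        rcases mem_insert.mp ht with h | h
        · subst h; exact hex x ⟨hxM, hxJ⟩
        · exact hxJ t h



lemma exists_nat_smul_mem (K : AddSubgroup (S → ℝ)) {x : S → ℝ}
    (hx : x ∈ Submodule.span ℚ (K : Set (S → ℝ))) :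
    ∃ N : ℕ, 0 < N ∧ (N : ℝ) • x ∈ K := by
  induction hx using Submodule.span_induction with
  | mem x h => exact ⟨1, one_pos, by simpa using h⟩
  | zero => exact ⟨1, one_pos, by simpa using K.zero_mem⟩
  | add x y hx hy ihx ihy =>
      obtain ⟨N₁, hN₁, hx'⟩ := ihx
      obtain ⟨N₂, hN₂, hy'⟩ := ihy
      refine ⟨N₁ * N₂, Nat.mul_pos hN₁ hN₂, ?_⟩
      have : ((N₁ * N₂ : ℕ) : ℝ) • (x + y)
          = (N₂ : ℝ) • ((N₁ : ℝ) • x) + (N₁ : ℝ) • ((N₂ : ℝ) • y) := by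
        push_cast; rw [smul_add, smul_smul, smul_smul]; ring_nf
      rw [this]
      refine K.add_mem ?_ ?_
      · rw [Nat.cast_smul_eq_nsmul]; exact K.nsmul_mem hx' N₂
      · rw [Nat.cast_smul_eq_nsmul]; exact K.nsmul_mem hy' N₁
  | smul q x hx ih =>
      obtain ⟨N, hN, hx'⟩ := ih
      refine ⟨q.den * N, Nat.mul_pos q.pos hN, ?_⟩
      have hq : q • x = (q : ℝ) • x := rfl
      have : ((q.den * N : ℕ) : ℝ) • (q • x) = (q.num : ℝ) • ((N : ℝ) • x) := by
        rw [hq, smul_smul, smul_smul]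
        push_cast
        rw [mul_comm ((q.den : ℝ) * N) (q : ℝ), ← mul_assoc]
        congr 1
        rw [mul_comm (q : ℝ) _, ← Rat.cast_natCast, ← Rat.cast_mul]
        rw [show (q.den : ℚ) * q = (q.num : ℚ) by
          rw [mul_comm]; exact_mod_cast Rat.mul_den_eq_num q]
        push_cast; ring
      rw [this, Int.cast_smul_eq_zsmul]
      exact K.zsmul_mem hx' q.num

lemma rat_coords (K : AddSubgroup (S → ℝ))
    (hKint : ∀ v ∈ K, ∀ s, ∃ z : ℤ, v s = (z : ℝ)) :
    ∀ x ∈ Submodule.span ℚ (K : Set (S → ℝ)), ∀ s, ∃ q : ℚ, x s = (q : ℝ) := by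
  intro x hx
  induction hx using Submodule.span_induction with
  | mem x h => intro s; obtain ⟨z, hz⟩ := hKint x h s; exact ⟨z, by exact_mod_cast hz⟩
  | zero => intro s; exact ⟨0, by simp⟩
  | add x y hx hy ihx ihy =>
      intro s
      obtain ⟨q₁, h₁⟩ := ihx s; obtain ⟨q₂, h₂⟩ := ihy s
      exact ⟨q₁ + q₂, by simp [h₁, h₂]⟩
  | smul q x hx ih =>
      intro s
      obtain ⟨qx, hqx⟩ := ih s
      refine ⟨q * qx, ?_⟩
      have : (q • x) s = (q : ℝ) * x s := rfl
      rw [this, hqx]; push_cast; ring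



/-- The linear functional `ℓ(v) = ∑ v s * log μ s` (with `log 0 = 0`). -/
noncomputable def ell (μ v : S → ℝ) : ℝ := ∑ s, v s * Real.log (μ s)

lemma ell_add (μ x y : S → ℝ) : ell μ (x + y) = ell μ x + ell μ y := by
  simp [ell, add_mul, Finset.sum_add_distrib]

lemma ell_smul (μ : S → ℝ) (c : ℝ) (x : S → ℝ) : ell μ (c • x) = c * ell μ x := by
  simp [ell, Finset.mul_sum, mul_assoc]

lemma ell_span_zero (μ : S → ℝ) (A : Set (S → ℝ)) (hA : ∀ x ∈ A, ell μ x = 0) :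
    ∀ v ∈ Submodule.span ℝ A, ell μ v = 0 := by
  intro v hv
  induction hv using Submodule.span_induction with
  | mem x h => exact hA x h
  | zero => simp [ell]
  | add x y hx hy ihx ihy => rw [ell_add, ihx, ihy, add_zero]
  | smul c x hx ih => rw [ell_smul, ih, mul_zero]

lemma prod_eq_iff_ell (μ v : S → ℝ) (hμ : ∀ s, 0 ≤ μ s)
    (hZ : ∀ s, μ s = 0 → v s = 0) :
    ((∏ s ∈ univ.filter (fun s => 0 < v s), (μ s) ^ (v s)) =
      ∏ s ∈ univ.filter (fun s => v s < 0), (μ s) ^ (-(v s))) ↔ ell μ v = 0 := by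
  classical
  have hpos : ∀ s, v s ≠ 0 → 0 < μ s := by
    intro s h
    rcases (hμ s).lt_or_eq with h' | h'
    · exact h'
    · exact absurd (hZ s h'.symm) h
  have hL : (∏ s ∈ univ.filter (fun s => 0 < v s), (μ s) ^ (v s)) =
      Real.exp (∑ s ∈ univ.filter (fun s => 0 < v s), Real.log (μ s) * v s) := by
    rw [Real.exp_sum]
    refine Finset.prod_congr rfl ?_
    intro s hs
    rw [Real.rpow_def_of_pos (hpos s (ne_of_gt (mem_filter.mp hs).2))]
  have hR : (∏ s ∈ univ.filter (fun s => v s < 0), (μ s) ^ (-(v s))) =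
      Real.exp (-∑ s ∈ univ.filter (fun s => v s < 0), Real.log (μ s) * v s) := by
    rw [← Finset.sum_neg_distrib, Real.exp_sum]
    refine Finset.prod_congr rfl ?_
    intro s hs
    rw [Real.rpow_def_of_pos (hpos s (ne_of_lt (mem_filter.mp hs).2)), mul_neg]
  have hsplit : ell μ v = (∑ s ∈ univ.filter (fun s => 0 < v s), Real.log (μ s) * v s)
      + ∑ s ∈ univ.filter (fun s => v s < 0), Real.log (μ s) * v s := by
    have h1 : ell μ v = ∑ s, Real.log (μ s) * v s := by
      simp [ell, mul_comm]
    rw [h1, ← Finset.sum_filter_add_sum_filter_not univ (fun s => 0 < v s)]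
    congr 1
    refine (Finset.sum_subset ?_ ?_).symm
    · intro s hs
      simp only [mem_filter, mem_univ, true_and] at hs ⊢
      exact not_lt.mpr hs.le
    · intro s hs hns
      simp only [mem_filter, mem_univ, true_and, not_lt] at hs hns
      have : v s = 0 := le_antisymm hs hns
      simp [this]
  rw [hL, hR, Real.exp_eq_exp, hsplit]
  constructor <;> intro h <;> linarith

lemma prod_pos_zero (μ v : S → ℝ) (s₀ : S) (hs₀ : μ s₀ = 0) (hv₀ : 0 < v s₀) :
    (∏ s ∈ univ.filter (fun s => 0 < v s), (μ s) ^ (v s)) = 0 := by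
  refine Finset.prod_eq_zero (mem_filter.mpr ⟨mem_univ s₀, hv₀⟩) ?_
  rw [hs₀, Real.zero_rpow (ne_of_gt hv₀)]

lemma prod_neg_zero (μ v : S → ℝ) (s₀ : S) (hs₀ : μ s₀ = 0) (hv₀ : v s₀ < 0) :
    (∏ s ∈ univ.filter (fun s => v s < 0), (μ s) ^ (-(v s))) = 0 := by
  refine Finset.prod_eq_zero (mem_filter.mpr ⟨mem_univ s₀, hv₀⟩) ?_
  rw [hs₀, Real.zero_rpow (by linarith)]

lemma prod_neg_pos (μ v : S → ℝ) (h : ∀ s, v s < 0 → 0 < μ s) :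
    0 < ∏ s ∈ univ.filter (fun s => v s < 0), (μ s) ^ (-(v s)) := by
  refine Finset.prod_pos ?_
  intro s hs
  exact Real.rpow_pos_of_pos (h s (mem_filter.mp hs).2) _

lemma prod_pos_pos (μ v : S → ℝ) (h : ∀ s, 0 < v s → 0 < μ s) :
    0 < ∏ s ∈ univ.filter (fun s => 0 < v s), (μ s) ^ (v s) := by
  refine Finset.prod_pos ?_
  intro s hs
  exact Real.rpow_pos_of_pos (h s (mem_filter.mp hs).2) _

lemma span_inter (K : AddSubgroup (S → ℝ))
    (hKint : ∀ v ∈ K, ∀ s, ∃ z : ℤ, v s = (z : ℝ)) (J : Finset S) {v : S → ℝ}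
    (hv : v ∈ Submodule.span ℝ (K : Set (S → ℝ))) (hvJ : ∀ s ∈ J, v s = 0) :
    v ∈ Submodule.span ℝ {x : S → ℝ | x ∈ K ∧ ∀ s ∈ J, x s = 0} := by
  set M := Submodule.span ℚ (K : Set (S → ℝ)) with hM
  have hKM : (K : Set (S → ℝ)) ⊆ (M : Set (S → ℝ)) := Submodule.subset_span
  have h1 : v ∈ Submodule.span ℝ (M : Set (S → ℝ)) :=
    Submodule.span_mono hKM hv
  have h2 := span_rat_coord_inter M (rat_coords K hKint) J v h1 hvJ
  have h3 : Submodule.span ℝ {x | x ∈ M ∧ ∀ s ∈ J, x s = 0} ≤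
      Submodule.span ℝ {x : S → ℝ | x ∈ K ∧ ∀ s ∈ J, x s = 0} := by
    refine Submodule.span_le.mpr ?_
    rintro x ⟨hxM, hxJ⟩
    obtain ⟨N, hN, hNx⟩ := exists_nat_smul_mem K hxM
    have hNne : (N : ℝ) ≠ 0 := Nat.cast_ne_zero.mpr hN.ne'
    have hx : x = (N : ℝ)⁻¹ • ((N : ℝ) • x) := (inv_smul_smul₀ hNne x).symm
    rw [hx]
    refine Submodule.smul_mem _ _ (Submodule.subset_span ⟨hNx, ?_⟩)
    intro s hs
    simp [hxJ s hs]
  exact h3 h2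

/-- If `μ ∈ lam κ` and `κ` has no negative coordinate on the zero set of `μ`,
then `κ` vanishes on the zero set. -/
lemma lam_oneside (μ κ : S → ℝ) (hμΔ : μ ∈ Delta S) (hlam : μ ∈ lam κ)
    (hnoneg : ∀ s, μ s = 0 → 0 ≤ κ s) : ∀ s, μ s = 0 → κ s = 0 := by
  intro s₀ hs₀
  by_contra hne
  have hpos : 0 < κ s₀ := lt_of_le_of_ne (hnoneg s₀ hs₀) (Ne.symm hne)
  have hL : (∏ s ∈ univ.filter (fun s => 0 < κ s), (μ s) ^ (κ s)) = 0 :=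
    prod_pos_zero μ κ s₀ hs₀ hpos
  have hR : 0 < ∏ s ∈ univ.filter (fun s => κ s < 0), (μ s) ^ (-(κ s)) := by
    refine prod_neg_pos μ κ ?_
    intro s hs
    rcases (hμΔ.1 s).lt_or_eq with h | h
    · exact h
    · exact absurd (hnoneg s h.symm) (not_le.mpr hs)
  have := hlam.2
  rw [hL] at this
  exact absurd this.symm (ne_of_gt hR)

lemma key_pos (K : AddSubgroup (S → ℝ))
    (hKint : ∀ v ∈ K, ∀ s, ∃ z : ℤ, v s = (z : ℝ))
    (μ : S → ℝ) (hμΔ : μ ∈ Delta S)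
    (hlam : ∀ κ ∈ K, μ ∈ lam κ) {v : S → ℝ}
    (hv : v ∈ Submodule.span ℝ (K : Set (S → ℝ)))
    (z : S) (hz : μ z = 0) (hvz : 0 < v z)
    (hnoneg : ∀ s, μ s = 0 → 0 ≤ v s) : False := by
  classical
  set Sp := Submodule.span ℝ (K : Set (S → ℝ)) with hSp
  set U : Finset S := univ.filter
    (fun s => μ s = 0 ∧ ∃ w, w ∈ Sp ∧ (∀ t, μ t = 0 → 0 ≤ w t) ∧ 0 < w s) with hU
  have hzU : z ∈ U := by
    rw [hU]; simp only [mem_filter, mem_univ, true_and]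
    exact ⟨hz, v, hv, hnoneg, hvz⟩
  have hUspec : ∀ s ∈ U, μ s = 0 ∧ ∃ w, w ∈ Sp ∧ (∀ t, μ t = 0 → 0 ≤ w t) ∧ 0 < w s :=
    fun s hs => (mem_filter.mp hs).2
  choose hUz w hw1 hw2 hw3 using hUspec
  set v' : S → ℝ := ∑ s ∈ U.attach, w s.1 s.2 with hv'
  have hv'app : ∀ t, v' t = ∑ s ∈ U.attach, w s.1 s.2 t := by
    intro t; rw [hv', Finset.sum_apply]
  have hv'Sp : v' ∈ Sp := Submodule.sum_mem _ (fun s _ => hw1 s.1 s.2)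
  have hv'nn : ∀ t, μ t = 0 → 0 ≤ v' t := by
    intro t ht; rw [hv'app]
    exact Finset.sum_nonneg (fun s _ => hw2 s.1 s.2 t ht)
  have hv'pos : ∀ s ∈ U, 0 < v' s := by
    intro s hs; rw [hv'app]
    exact Finset.sum_pos' (fun t _ => hw2 t.1 t.2 s (hUz s hs))
      ⟨⟨s, hs⟩, Finset.mem_attach _ _, hw3 s hs⟩
  have hv'zero : ∀ t, μ t = 0 → t ∉ U → v' t = 0 := by
    intro t ht htU
    rcases (hv'nn t ht).lt_or_eq with h | h
    · exfalso; apply htU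
      rw [hU]; simp only [mem_filter, mem_univ, true_and]
      exact ⟨ht, v', hv'Sp, hv'nn, h⟩
    · exact h.symm
  set J : Finset S := univ.filter (fun t => μ t = 0 ∧ t ∉ U) with hJ
  have hv'J : ∀ t ∈ J, v' t = 0 := by
    intro t ht
    obtain ⟨h1, h2⟩ := (mem_filter.mp ht).2
    exact hv'zero t h1 h2
  have hsp := span_inter K hKint J hv'Sp hv'J
  obtain ⟨c, hcsupp, hrep⟩ := Submodule.mem_span_set.mp hsp
  have hrep' : v' = ∑ a ∈ c.support, c a • a := by
    rw [← hrep]; rfl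
  set D : ℝ := (∑ a ∈ c.support, ∑ s, |a s|) + 1 with hD
  have hD1 : 1 ≤ D := by
    rw [hD]
    have : (0:ℝ) ≤ ∑ a ∈ c.support, ∑ s, |a s| :=
      Finset.sum_nonneg fun a _ => Finset.sum_nonneg fun s _ => abs_nonneg _
    linarith
  have hDpos : 0 < D := by linarith
  have hUne : U.Nonempty := ⟨z, hzU⟩
  set m : ℝ := U.inf' hUne (fun s => v' s) with hm
  have hmpos : 0 < m := by
    obtain ⟨s₀, hs₀, hs₀'⟩ := Finset.exists_mem_eq_inf' hUne (fun s => v' s)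
    rw [hm, hs₀']
    exact hv'pos s₀ hs₀
  have hmle : ∀ s ∈ U, m ≤ v' s := fun s hs => Finset.inf'_le _ hs
  set δ : ℝ := m / D with hδ
  have hδpos : 0 < δ := div_pos hmpos hDpos
  have hqex : ∀ a : S → ℝ, ∃ q : ℚ, |c a - (q:ℝ)| < δ := fun a => exists_rat_near (c a) hδpos
  choose q hq using hqex
  set κ' : S → ℝ := ∑ a ∈ c.support, ((q a : ℝ)) • a with hκ'
  have hκ'app : ∀ t, κ' t = ∑ a ∈ c.support, (q a : ℝ) * a t := by
    intro t; rw [hκ', Finset.sum_apply]; rfl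
  have hκ'M : κ' ∈ Submodule.span ℚ (K : Set (S → ℝ)) := by
    refine Submodule.sum_mem _ (fun a ha => ?_)
    have haK : a ∈ K := (hcsupp ha).1
    have : ((q a : ℝ)) • a = (q a : ℚ) • a := rfl
    rw [this]
    exact Submodule.smul_mem _ _ (Submodule.subset_span haK)
  obtain ⟨N, hN, hNκ⟩ := exists_nat_smul_mem K hκ'M
  have hdiff : ∀ t, |κ' t - v' t| ≤ δ * (D - 1) := by
    intro t
    have h1 : κ' t - v' t = ∑ a ∈ c.support, ((q a : ℝ) - c a) * a t := by
      rw [hκ'app, hrep']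
      rw [Finset.sum_apply, ← Finset.sum_sub_distrib]
      refine Finset.sum_congr rfl fun a _ => ?_
      simp [sub_mul]
    rw [h1]
    calc |∑ a ∈ c.support, ((q a : ℝ) - c a) * a t|
        ≤ ∑ a ∈ c.support, |((q a : ℝ) - c a) * a t| := Finset.abs_sum_le_sum_abs _ _
      _ ≤ ∑ a ∈ c.support, δ * |a t| := by
          refine Finset.sum_le_sum fun a _ => ?_
          rw [abs_mul]
          refine mul_le_mul_of_nonneg_right ?_ (abs_nonneg _)
          rw [abs_sub_comm]
          exact (hq a).le
      _ = δ * ∑ a ∈ c.support, |a t| := by rw [Finset.mul_sum]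
      _ ≤ δ * (D - 1) := by
          refine mul_le_mul_of_nonneg_left ?_ hδpos.le
          rw [hD]
          have : ∑ a ∈ c.support, |a t| ≤ ∑ a ∈ c.support, ∑ s, |a s| := by
            refine Finset.sum_le_sum fun a _ => ?_
            exact Finset.single_le_sum (f := fun s => |a s|)
              (fun s _ => abs_nonneg _) (mem_univ t)
          linarith
  have hδD : δ * (D - 1) < m := by
    have h1 : δ * D = m := div_mul_cancel₀ m (ne_of_gt hDpos)
    nlinarith
  have hκ'U : ∀ s ∈ U, 0 < κ' s := by
    intro s hs
    have h1 := hdiff s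
    have h2 := hmle s hs
    have h3 := neg_abs_le (κ' s - v' s)
    linarith [abs_nonneg (κ' s - v' s)]
  have hκ'J : ∀ t ∈ J, κ' t = 0 := by
    intro t ht
    rw [hκ'app]
    refine Finset.sum_eq_zero fun a ha => ?_
    rw [(hcsupp ha).2 t ht, mul_zero]
  set κ : S → ℝ := (N : ℝ) • κ' with hκdef
  have hκnn : ∀ s, μ s = 0 → 0 ≤ κ s := by
    intro s hs
    by_cases hsU : s ∈ U
    · have := hκ'U s hsU
      have : (0:ℝ) ≤ (N:ℝ) * κ' s := by positivity
      simpa [hκdef] using this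
    · have hsJ : s ∈ J := by rw [hJ]; simp only [mem_filter, mem_univ, true_and]; exact ⟨hs, hsU⟩
      simp [hκdef, hκ'J s hsJ]
  have hκz : 0 < κ z := by
    have h1 := hκ'U z hzU
    have h2 : (0:ℝ) < (N:ℝ) := by exact_mod_cast hN
    have : (0:ℝ) < (N:ℝ) * κ' z := mul_pos h2 h1
    simpa [hκdef] using this
  have := lam_oneside μ κ hμΔ (hlam κ hNκ) hκnn z hz
  rw [this] at hκz
  exact lt_irrefl 0 hκz

end Aux

open Finset in
set_option maxHeartbeats 1000000 in
/-- if `K` is a subgroup of `V₀` consisting of vectors with integer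
coordinates and `V_K` is its real linear span, then `Λ_K = Λ_{V_K}`. -/
theorem Lam_eq_Lam_span (S : Type*) [Fintype S] (K : AddSubgroup (S → ℝ))
    (hKV : (K : Set (S → ℝ)) ⊆ V0 S)
    (hKint : ∀ v ∈ K, ∀ s, ∃ z : ℤ, v s = (z : ℝ)) :
    Lam (K : Set (S → ℝ)) = Lam ((Submodule.span ℝ (K : Set (S → ℝ)) : Submodule ℝ (S → ℝ)) : Set (S → ℝ)) := by
  classical
  ext μ
  simp only [Lam, Set.mem_iInter]
  constructor
  · intro hμ
    have hlamK : ∀ κ ∈ K, μ ∈ lam κ := fun κ hκ => hμ κ hκ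
    have hμΔ : μ ∈ Delta S := (hlamK 0 K.zero_mem).1
    intro v hv
    refine ⟨hμΔ, ?_⟩
    by_cases hzero : ∀ s, μ s = 0 → v s = 0
    · rw [prod_eq_iff_ell μ v hμΔ.1 hzero]
      set J : Finset S := univ.filter (fun s => μ s = 0) with hJ
      have hvJ : ∀ s ∈ J, v s = 0 := by
        intro s hs
        exact hzero s (mem_filter.mp hs).2
      have hsp := span_inter K hKint J hv hvJ
      refine ell_span_zero μ _ ?_ v hsp
      rintro x ⟨hxK, hxJ⟩
      have hxZ : ∀ s, μ s = 0 → x s = 0 := by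
        intro s hs
        exact hxJ s (by rw [hJ]; simp [hs])
      exact (prod_eq_iff_ell μ x hμΔ.1 hxZ).mp (hlamK x hxK).2
    · push_neg at hzero
      obtain ⟨z, hz, hvz⟩ := hzero
      have hmix : (∃ s, μ s = 0 ∧ 0 < v s) ∧ (∃ s, μ s = 0 ∧ v s < 0) := by
        rcases (Ne.lt_or_gt hvz) with h | h
        · constructor
          · by_contra hcon
            push_neg at hcon
            have hnoneg : ∀ s, μ s = 0 → 0 ≤ (-v) s := by
              intro s hs
              simpa using hcon s hs
            exact key_pos K hKint μ hμΔ hlamK (Submodule.neg_mem _ hv) z hz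
              (by simpa using h.le.lt_of_ne (by simpa using hvz)) hnoneg
          · exact ⟨z, hz, h⟩
        · constructor
          · exact ⟨z, hz, h⟩
          · by_contra hcon
            push_neg at hcon
            have hnoneg : ∀ s, μ s = 0 → 0 ≤ v s := fun s hs => (hcon s hs)
            exact key_pos K hKint μ hμΔ hlamK hv z hz h hnoneg
      obtain ⟨⟨s₁, hs₁, hv₁⟩, ⟨s₂, hs₂, hv₂⟩⟩ := hmix
      rw [prod_pos_zero μ v s₁ hs₁ hv₁, prod_neg_zero μ v s₂ hs₂ hv₂]
  · intro hμ κ hκ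
    exact hμ κ (Submodule.subset_span hκ)
end
end

section
/- Let L be an affine line in ℝ^S intersecting the simplex Δ_S in a nondegenerate segment with endpoints a and b. Then the set λ_{a−b} intersects L in exactly one point, and this point lies in the relative interior of the segment [a,b]. -/
open scoped BigOperators

noncomputable section

/-!
Along the line `t ↦ a + t • (b - a)` only the parameters `t ∈ [0, 1]` stay in `Δ_S`, because of
the coordinates `q` and `r`. On `[0, 1]` the coordinates where `κ = a - b` is positive decrease and
those where it is negative increase, so the difference of the two sides of the equation defining
`λ_κ` is continuous and strictly decreasing; it is positive at `a` (the negative side contains the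
factor `a q = 0`) and negative at `b` (the positive side contains `b r = 0`). It therefore has
exactly one zero, which lies in `(0, 1)`.
-/

open Set Finset

theorem Finset.prod_rpow_lt_prod_rpow {ι : Type*} {T : Finset ι} (hT : T.Nonempty)
    {x y e : ι → ℝ} (hx : ∀ i ∈ T, 0 ≤ x i) (hxy : ∀ i ∈ T, x i < y i) (he : ∀ i ∈ T, 0 < e i) :
    ∏ i ∈ T, x i ^ e i < ∏ i ∈ T, y i ^ e i := by
  have hy_pos : 0 < ∏ i ∈ T, y i ^ e i :=
    prod_pos fun i hi => Real.rpow_pos_of_pos ((hx i hi).trans_lt (hxy i hi)) _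
  by_cases hx_pos : ∀ i ∈ T, 0 < x i
  · exact prod_lt_prod_of_nonempty (fun i hi => Real.rpow_pos_of_pos (hx_pos i hi) _)
      (fun i hi => Real.rpow_lt_rpow (hx i hi) (hxy i hi) (he i hi)) hT
  · simp only [not_forall, not_lt] at hx_pos
    obtain ⟨i, hi, hxi⟩ := hx_pos
    rwa [prod_eq_zero hi (by rw [le_antisymm hxi (hx i hi), Real.zero_rpow (he i hi).ne'])]

theorem exists_mem_Ioo_forall_eq_zero_iff {f : ℝ → ℝ} {a b : ℝ} (hab : a ≤ b)
    (hf : ContinuousOn f (Icc a b)) (hanti : StrictAntiOn f (Icc a b)) (ha : 0 < f a)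
    (hb : f b < 0) : ∃ c ∈ Ioo a b, ∀ t ∈ Icc a b, f t = 0 ↔ t = c := by
  obtain ⟨c, hc, hfc⟩ := intermediate_value_Ioo' hab hf ⟨hb, ha⟩
  refine ⟨c, hc, fun t ht => ⟨fun hft => ?_, fun htc => htc ▸ hfc⟩⟩
  exact hanti.injOn ht (Ioo_subset_Icc_self hc) (hft.trans hfc.symm)

section Simplex

variable {S : Type*} [Fintype S]

theorem convex_Delta : Convex ℝ (Delta S) := by
  intro x hx y hy s t hs ht hst
  refine ⟨fun i => ?_, ?_⟩
  · simp only [Pi.add_apply, Pi.smul_apply, smul_eq_mul]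
    exact add_nonneg (mul_nonneg hs (hx.1 i)) (mul_nonneg ht (hy.1 i))
  · simp only [Pi.add_apply, Pi.smul_apply, smul_eq_mul, sum_add_distrib, ← mul_sum, hx.2, hy.2,
      hst, mul_one]

theorem nonneg_of_add_smul_sub_mem_Delta {a b : S → ℝ} {t : ℝ} (h : a + t • (b - a) ∈ Delta S)
    {q : S} (haq : a q = 0) (hbq : 0 < b q) : 0 ≤ t := by
  have := h.1 q
  simp only [Pi.add_apply, Pi.smul_apply, Pi.sub_apply, smul_eq_mul, haq, zero_add, sub_zero]
    at this
  exact nonneg_of_mul_nonneg_left this hbq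

theorem le_one_of_add_smul_sub_mem_Delta {a b : S → ℝ} {t : ℝ} (h : a + t • (b - a) ∈ Delta S)
    {r : S} (hbr : b r = 0) (har : 0 < a r) : t ≤ 1 := by
  have h' : b + (1 - t) • (a - b) ∈ Delta S := by
    convert h using 1
    module
  linarith [nonneg_of_add_smul_sub_mem_Delta h' hbr har]

def lamGap (κ μ : S → ℝ) : ℝ :=
  ∏ s ∈ univ.filter (fun s => 0 < κ s), μ s ^ κ s -
    ∏ s ∈ univ.filter (fun s => κ s < 0), μ s ^ (-κ s)

theorem mem_lam_iff_s8 {κ μ : S → ℝ} : μ ∈ lam κ ↔ μ ∈ Delta S ∧ lamGap κ μ = 0 := by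
  rw [lamGap, sub_eq_zero]
  rfl

theorem lamGap_neg (κ μ : S → ℝ) : lamGap (-κ) μ = -lamGap κ μ := by
  simp only [lamGap, Pi.neg_apply, neg_pos, neg_lt_zero, neg_neg, neg_sub]

theorem continuous_lamGap (κ : S → ℝ) : Continuous (lamGap κ) := by
  refine .sub (continuous_finsetProd _ fun s hs => ?_) (continuous_finsetProd _ fun s hs => ?_)
  · exact (continuous_apply s).rpow_const fun _ => .inr (mem_filter.1 hs).2.le
  · exact (continuous_apply s).rpow_const fun _ => .inr (neg_nonneg.2 (mem_filter.1 hs).2.le)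

theorem lamGap_sub_pos {a b : S → ℝ} (hb : ∀ s, 0 ≤ b s) {q : S} (haq : a q = 0) (hbq : 0 < b q) :
    0 < lamGap (a - b) a := by
  have hq : q ∈ univ.filter (fun s => (a - b) s < 0) := by simpa [haq] using hbq
  rw [lamGap, prod_eq_zero hq (by rw [haq, Real.zero_rpow (neg_pos.2 (mem_filter.1 hq).2).ne']),
    sub_zero]
  refine prod_pos fun s hs => Real.rpow_pos_of_pos ?_ _
  have : b s < a s := sub_pos.1 (mem_filter.1 hs).2
  linarith [hb s]

theorem strictAntiOn_lamGap_line {a b : S → ℝ} (ha : a ∈ Delta S) (hb : b ∈ Delta S) {q r : S}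
    (hq : a q < b q) (hr : b r < a r) :
    StrictAntiOn (fun t : ℝ => lamGap (a - b) (a + t • (b - a))) (Icc 0 1) := by
  intro t₁ ht₁ t₂ ht₂ hlt
  set x₁ := a + t₁ • (b - a)
  set x₂ := a + t₂ • (b - a)
  have hx₁ : ∀ s, 0 ≤ x₁ s := (convex_Delta.add_smul_sub_mem ha hb ht₁).1
  have hx₂ : ∀ s, 0 ≤ x₂ s := (convex_Delta.add_smul_sub_mem ha hb ht₂).1
  have hpos := prod_rpow_lt_prod_rpow (T := univ.filter (fun s => 0 < (a - b) s))
    (x := x₂) (y := x₁) ⟨r, by simpa using hr⟩ (fun s _ => hx₂ s)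
    (fun s hs => by
      have : b s < a s := sub_pos.1 (mem_filter.1 hs).2
      show a s + t₂ * (b s - a s) < a s + t₁ * (b s - a s)
      nlinarith)
    (fun s hs => (mem_filter.1 hs).2)
  have hneg := prod_rpow_lt_prod_rpow (T := univ.filter (fun s => (a - b) s < 0))
    (x := x₁) (y := x₂) (e := -(a - b))
    ⟨q, by simpa using hq⟩ (fun s _ => hx₁ s)
    (fun s hs => by
      have : a s < b s := sub_neg.1 (mem_filter.1 hs).2
      show a s + t₁ * (b s - a s) < a s + t₂ * (b s - a s)
      nlinarith)
    (fun s hs => neg_pos.2 (mem_filter.1 hs).2)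
  exact sub_lt_sub hpos hneg

end Simplex

theorem lam_inter_line_eq_singleton_general (S : Type*) [Fintype S] (a b : S → ℝ)
    (ha : a ∈ Delta S) (hb : b ∈ Delta S)
    (q : S) (haq : a q = 0) (hbq : 0 < b q)
    (r : S) (hbr : b r = 0) (har : 0 < a r) :
    ∃ μ : S → ℝ,
      lam (a - b) ∩ {x | ∃ t : ℝ, x = a + t • (b - a)} = {μ} ∧
      μ ∈ openSegment ℝ a b := by
  have hF0 : 0 < lamGap (a - b) (a + (0 : ℝ) • (b - a)) := by
    simpa using lamGap_sub_pos hb.1 haq hbq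
  have hF1 : lamGap (a - b) (a + (1 : ℝ) • (b - a)) < 0 := by
    rw [one_smul, add_sub_cancel, ← neg_sub b a, lamGap_neg, neg_lt_zero]
    exact lamGap_sub_pos ha.1 hbr har
  obtain ⟨t₀, ht₀, hzero⟩ := exists_mem_Ioo_forall_eq_zero_iff zero_le_one
    ((continuous_lamGap _).comp (by fun_prop)).continuousOn
    (strictAntiOn_lamGap_line ha hb (haq.symm ▸ hbq) (hbr.symm ▸ har)) hF0 hF1
  refine ⟨a + t₀ • (b - a), ?_, openSegment_eq_image' ℝ a b ▸ ⟨t₀, ht₀, rfl⟩⟩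
  ext x
  simp only [mem_inter_iff, mem_ofPred_eq, mem_singleton_iff, mem_lam_iff_s8]
  constructor
  · rintro ⟨⟨hx, hgap⟩, t, rfl⟩
    rw [← (hzero t ⟨nonneg_of_add_smul_sub_mem_Delta hx haq hbq,
      le_one_of_add_smul_sub_mem_Delta hx hbr har⟩).1 hgap]
  · rintro rfl
    have ht₀' := Ioo_subset_Icc_self ht₀
    exact ⟨⟨convex_Delta.add_smul_sub_mem ha hb ht₀', (hzero t₀ ht₀').2 rfl⟩, t₀, rfl⟩

/-- if a line meets the simplex `Δ_S` in a nondegenerate segment with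
endpoints `a` and `b`, then `λ_{a-b}` meets the line in exactly one point, which lies
in the open segment `(a, b)`. -/
theorem lam_inter_line_eq_singleton (S : Type*) [Fintype S] (a b : S → ℝ)
    (ha : a ∈ Delta S) (hb : b ∈ Delta S) (hab : a ≠ b)
    (q : S) (haq : a q = 0) (hbq : 0 < b q)
    (r : S) (hbr : b r = 0) (har : 0 < a r) :
    ∃ μ : S → ℝ,
      lam (a - b) ∩ {x | ∃ t : ℝ, x = a + t • (b - a)} = {μ} ∧
      μ ∈ openSegment ℝ a b :=
  lam_inter_line_eq_singleton_general S a b ha hb q haq hbq r hbr har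
end
end

section
/- If K is a linear subspace of V₀ and ρ: ℝ^S → ℝ^S/K is the quotient map, then the restriction of ρ to Λ_K is injective. -/
open scoped BigOperators

noncomputable section

/-! If `μ ≠ ν` both lie in `Λ_K`, then `κ = μ - ν` lies in `K`, so both satisfy the centrality
equation of `κ`. Since `∑ κ = 0`, the set `P` where `κ > 0` (i.e. `μ > ν`) is nonempty, and on
the set `N` where `κ < 0` we have `μ < ν`. Monotonicity of `x ↦ x ^ |κ s|` then gives
`∏_P ν^κ < ∏_P μ^κ = ∏_N μ^(-κ) ≤ ∏_N ν^(-κ) = ∏_P ν^κ`, a contradiction. -/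

open Finset

theorem Finset.prod_lt_prod_of_nonempty_of_nonneg {ι R : Type*} [CommSemiring R] [PartialOrder R]
    [IsStrictOrderedRing R] {s : Finset ι} {f g : ι → R} (hf : ∀ i ∈ s, 0 ≤ f i)
    (hfg : ∀ i ∈ s, f i < g i) (hs : s.Nonempty) : ∏ i ∈ s, f i < ∏ i ∈ s, g i := by
  induction hs using Finset.Nonempty.cons_induction with
  | singleton i => simpa using hfg i (mem_singleton_self i)
  | cons i s _ _ ih =>
    simp only [prod_cons, forall_mem_cons] at hf hfg ⊢
    exact mul_lt_mul'' hfg.1 (ih hf.2 hfg.2) hf.1 (prod_nonneg hf.2)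

theorem Finset.exists_lt_of_sum_eq_of_ne {ι M : Type*} [Fintype ι] [AddCommGroup M]
    [LinearOrder M] [IsOrderedAddMonoid M] {f g : ι → M} (hsum : ∑ i, f i = ∑ i, g i)
    (hne : f ≠ g) : ∃ i, g i < f i := by
  obtain ⟨i, -, hi⟩ := exists_pos_of_sum_zero_of_exists_nonzero (s := univ) (f - g)
    (by simp [sum_sub_distrib, hsum]) (by simpa [sub_eq_zero, funext_iff] using hne)
  exact ⟨i, sub_pos.mp hi⟩

theorem eq_of_mem_lam_sub {S : Type*} [Fintype S] {μ ν : S → ℝ} (hμ : μ ∈ lam (μ - ν))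
    (hν : ν ∈ lam (μ - ν)) : μ = ν := by
  by_contra hne
  set κ := μ - ν
  set P := univ.filter fun s => 0 < κ s
  set N := univ.filter fun s => κ s < 0
  obtain ⟨hμΔ, hμeq⟩ := hμ
  obtain ⟨hνΔ, hνeq⟩ := hν
  have hP_nonempty : P.Nonempty := by
    obtain ⟨s, hs⟩ := exists_lt_of_sum_eq_of_ne (hμΔ.2.trans hνΔ.2.symm) hne
    exact ⟨s, by simpa [P, κ] using hs⟩
  have hP : ∏ s ∈ P, ν s ^ κ s < ∏ s ∈ P, μ s ^ κ s := by
    refine prod_lt_prod_of_nonempty_of_nonneg (fun s _ => Real.rpow_nonneg (hνΔ.1 s) _)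
      (fun s hs => ?_) hP_nonempty
    have hκ : 0 < κ s := (mem_filter.mp hs).2
    exact Real.rpow_lt_rpow (hνΔ.1 s) (by simpa [κ] using hκ) hκ
  have hN : ∏ s ∈ N, μ s ^ (-κ s) ≤ ∏ s ∈ N, ν s ^ (-κ s) := by
    refine prod_le_prod (fun s _ => Real.rpow_nonneg (hμΔ.1 s) _) (fun s hs => ?_)
    have hκ : κ s < 0 := (mem_filter.mp hs).2
    exact Real.rpow_le_rpow (hμΔ.1 s) (by simpa [κ] using hκ.le) (by linarith)
  linarith

theorem quotient_map_injOn_Lam_general (S : Type*) [Fintype S] (K : Submodule ℝ (S → ℝ)) :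
    Set.InjOn K.mkQ (Lam (K : Set (S → ℝ))) := by
  intro μ hμ ν hν hρ
  have hκ : μ - ν ∈ K := (Submodule.Quotient.eq K).mp hρ
  exact eq_of_mem_lam_sub (Set.mem_iInter₂.mp hμ _ hκ) (Set.mem_iInter₂.mp hν _ hκ)

/-- if `K` is a linear subspace of `V₀` and `ρ : ℝ^S → ℝ^S/K` is the
quotient map, then the restriction of `ρ` to `Λ_K` is injective. -/
theorem quotient_map_injOn_Lam (S : Type*) [Fintype S] (K : Submodule ℝ (S → ℝ))
    (hKV : (K : Set (S → ℝ)) ⊆ V0 S) :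
    Set.InjOn K.mkQ (Lam (K : Set (S → ℝ))) :=
  quotient_map_injOn_Lam_general S K
end
end

section
/- If K is a linear subspace of V₀ and ρ: ℝ^S → ℝ^S/K is the quotient map, then ρ maps Λ_K ∩ ∂Δ_S into the boundary of the convex polytope ρ(Δ_S). -/
open scoped BigOperators

noncomputable section

/- If `ρ μ` were in the relative interior of `ρ(Δ_S)`, one could move a little beyond `ρ μ`
away from the image of the uniform distribution and stay in `ρ(Δ_S)`; averaging back with
the uniform distribution gives a strictly positive `μ'` with `ρ μ' = ρ μ`, so `κ = μ' - μ ∈ K`.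
Since `μ` vanishes somewhere, `κ` is positive there and the left side of the equation of `λ_κ`
is `0`, while `μ > μ' > 0` wherever `κ < 0`, so the right side is positive. -/

open Topology

section IntrinsicInterior

variable {E : Type*} [AddCommGroup E] [Module ℝ E] [TopologicalSpace E]
  [IsTopologicalAddGroup E] [ContinuousSMul ℝ E]

theorem exists_pos_add_smul_sub_mem_of_mem_intrinsicInterior {A : Set E} {x y : E}
    (hx : x ∈ intrinsicInterior ℝ A) (hy : y ∈ affineSpan ℝ A) :
    ∃ t > (0 : ℝ), x + t • (x - y) ∈ A := by
  obtain ⟨⟨x, hxA⟩, hx_int, rfl⟩ := mem_intrinsicInterior.mp hx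
  have hline : ∀ t : ℝ, x + t • (x - y) ∈ affineSpan ℝ A := fun t => by
    simpa [vsub_eq_sub, vadd_eq_add, add_comm] using
      AffineSubspace.smul_vsub_vadd_mem _ t hxA hy hxA
  let line : ℝ → affineSpan ℝ A := fun t => ⟨x + t • (x - y), hline t⟩
  have hline_cont : Continuous line := by fun_prop
  have hline_zero : line 0 = ⟨x, hxA⟩ := by simp [line]
  have heventually : ∀ᶠ t in 𝓝[>] (0 : ℝ), line t ∈ interior (Subtype.val ⁻¹' A) :=
    nhdsWithin_le_nhds <| hline_cont.continuousAt.preimage_mem_nhds <| by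
      rw [hline_zero]; exact isOpen_interior.mem_nhds hx_int
  obtain ⟨t, ht_int, ht_pos⟩ := (heventually.and self_mem_nhdsWithin).exists
  exact ⟨t, ht_pos, interior_subset (s := Subtype.val ⁻¹' A) ht_int⟩

end IntrinsicInterior

section Simplex

variable {S : Type*} [Fintype S]

theorem smul_add_smul_mem_intDelta {σ ν : S → ℝ} (hσ : σ ∈ Delta S) (hν : ν ∈ intDelta S)
    {a b : ℝ} (ha : 0 ≤ a) (hb : 0 < b) (hab : a + b = 1) : a • σ + b • ν ∈ intDelta S := by
  refine ⟨fun s => ?_, ?_⟩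
  · have := mul_nonneg ha (hσ.1 s)
    have := mul_pos hb (hν.1 s)
    simp only [Pi.add_apply, Pi.smul_apply, smul_eq_mul]
    linarith
  · simp [Finset.sum_add_distrib, ← Finset.mul_sum, hσ.2, hν.2, hab]

def uniformDist (S : Type*) [Fintype S] : S → ℝ := fun _ => (Fintype.card S : ℝ)⁻¹

theorem uniformDist_mem_intDelta [Nonempty S] : uniformDist S ∈ intDelta S :=
  ⟨fun _ => by simp [uniformDist, Fintype.card_pos], by simp [uniformDist]⟩

theorem intDelta_subset_Delta : intDelta S ⊆ Delta S := fun _ hμ => ⟨fun s => (hμ.1 s).le, hμ.2⟩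

theorem exists_mem_intDelta_map_eq_of_mem_intrinsicInterior [Nonempty S]
    {E : Type*} [AddCommGroup E] [Module ℝ E] [TopologicalSpace E]
    [IsTopologicalAddGroup E] [ContinuousSMul ℝ E] (ρ : (S → ℝ) →ₗ[ℝ] E) {μ : S → ℝ}
    (hμ : ρ μ ∈ intrinsicInterior ℝ (ρ '' Delta S)) :
    ∃ μ' ∈ intDelta S, ρ μ' = ρ μ := by
  set ν := uniformDist S
  have hν : ν ∈ intDelta S := uniformDist_mem_intDelta
  obtain ⟨t, ht, σ, hσ, hσμ⟩ := exists_pos_add_smul_sub_mem_of_mem_intrinsicInterior hμ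
    (subset_affineSpan ℝ _ ⟨ν, intDelta_subset_Delta hν, rfl⟩)
  have h1t : (1 + t) ≠ 0 := by positivity
  refine ⟨(1 + t)⁻¹ • σ + (t / (1 + t)) • ν, smul_add_smul_mem_intDelta hσ hν (by positivity)
    (by positivity) (by field_simp), ?_⟩
  rw [map_add, map_smul, map_smul, hσμ, div_eq_inv_mul, ← smul_smul, ← smul_add]
  rw [show ρ μ + t • (ρ μ - ρ ν) + t • ρ ν = (1 + t) • ρ μ by module, smul_smul,
    inv_mul_cancel₀ h1t, one_smul]

theorem notMem_lam_sub_of_pos {μ μ' : S → ℝ} (hμ' : ∀ s, 0 < μ' s) {s₀ : S}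
    (hs₀ : μ s₀ = 0) : μ ∉ lam (μ' - μ) := by
  rintro ⟨-, heq⟩
  have hlhs : ∏ s ∈ Finset.univ.filter (fun s => 0 < (μ' - μ) s), μ s ^ (μ' - μ) s = 0 :=
    Finset.prod_eq_zero (i := s₀) (by simp [hs₀, hμ' s₀]) <| by
      simp [hs₀, (hμ' s₀).ne']
  have hrhs : 0 < ∏ s ∈ Finset.univ.filter (fun s => (μ' - μ) s < 0), μ s ^ (-(μ' - μ) s) :=
    Finset.prod_pos fun s hs => by
      have hs' : μ' s < μ s := by simpa using (Finset.mem_filter.mp hs).2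
      exact Real.rpow_pos_of_pos ((hμ' s).trans hs') _
  exact hrhs.ne' (heq ▸ hlhs)

end Simplex

theorem quotient_maps_LamK_boundary_into_frontier_general (S : Type*) [Fintype S]
    (K : Submodule ℝ (S → ℝ))
    (Q : Type*) [NormedAddCommGroup Q] [NormedSpace ℝ Q]
    (ρ : (S → ℝ) →ₗ[ℝ] Q) (hker : LinearMap.ker ρ = K) :
    ρ '' (Lam (K : Set (S → ℝ)) ∩ {μ ∈ Delta S | ∃ s, μ s = 0}) ⊆
      intrinsicFrontier ℝ (ρ '' Delta S) := by
  rintro _ ⟨μ, ⟨hμΛ, hμΔ, s₀, hs₀⟩, rfl⟩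
  have : Nonempty S := ⟨s₀⟩
  rw [← intrinsicClosure_sdiff_intrinsicInterior]
  refine ⟨subset_intrinsicClosure ⟨μ, hμΔ, rfl⟩, fun hint => ?_⟩
  obtain ⟨μ', hμ', hρμ'⟩ := exists_mem_intDelta_map_eq_of_mem_intrinsicInterior ρ hint
  have hκ : μ' - μ ∈ K := by rw [← hker, LinearMap.mem_ker, map_sub, hρμ', sub_self]
  exact notMem_lam_sub_of_pos hμ'.1 hs₀ (Set.mem_iInter₂.mp hμΛ _ hκ)

/-- if `K` is a linear subspace of `V₀` and `ρ : ℝ^S → ℝ^S/K` is the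
quotient map (realized as a surjective linear map with kernel `K`), then `ρ` maps
`Λ_K ∩ ∂Δ_S` into the boundary (relative to the affine hull) of the convex
polytope `ρ(Δ_S)`. -/
theorem quotient_maps_LamK_boundary_into_frontier (S : Type*) [Fintype S]
    (K : Submodule ℝ (S → ℝ)) (hKV : (K : Set (S → ℝ)) ⊆ V0 S)
    (Q : Type*) [NormedAddCommGroup Q] [NormedSpace ℝ Q]
    (ρ : (S → ℝ) →ₗ[ℝ] Q) (hker : LinearMap.ker ρ = K)
    (hsurj : Function.Surjective ρ) :
    ρ '' (Lam (K : Set (S → ℝ)) ∩ {μ ∈ Delta S | ∃ s, μ s = 0}) ⊆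
      intrinsicFrontier ℝ (ρ '' Delta S) :=
  quotient_maps_LamK_boundary_into_frontier_general S K Q ρ hker
end
end

section
/- If K is a linear subspace of V₀, then the quotient map ρ restricts to a homeomorphism from Λ_K onto the convex polytope ρ(Δ_S), mapping Λ_K ∩ ∂Δ_S homeomorphically onto ∂(ρ(Δ_S)) and Λ_K ∩ int(Δ_S) onto int(ρ(Δ_S)). -/
open scoped BigOperators

noncomputable section

open Filter Real Set Topology

namespace BirchAux

variable {S : Type*} [Fintype S]

/-- entropy -/
def Ent (μ : S → ℝ) : ℝ := ∑ s, Real.negMulLog (μ s)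

lemma continuous_Ent : Continuous (Ent (S := S)) := by
  apply continuous_finset_sum
  intro s _
  exact Real.continuous_negMulLog.comp (continuous_apply s)

lemma isClosed_delta : IsClosed (Delta S) := by
  have h1 : IsClosed {μ : S → ℝ | ∀ s, 0 ≤ μ s} := by
    have : {μ : S → ℝ | ∀ s, 0 ≤ μ s} = ⋂ s, {μ | 0 ≤ μ s} := by
      ext; simp
    rw [this]
    exact isClosed_iInter fun s => isClosed_le continuous_const (continuous_apply s)
  have h2 : IsClosed {μ : S → ℝ | ∑ s, μ s = 1} :=
    isClosed_eq (continuous_finset_sum _ fun s _ => continuous_apply s) continuous_const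
  exact h1.inter h2

lemma isCompact_delta : IsCompact (Delta S) := by
  have hsub : Delta S ⊆ Set.pi Set.univ (fun _ : S => Set.Icc (0:ℝ) 1) := by
    intro μ hμ s _
    refine ⟨hμ.1 s, ?_⟩
    rw [← hμ.2]
    exact Finset.single_le_sum (fun r _ => hμ.1 r) (Finset.mem_univ s)
  exact (isCompact_univ_pi fun _ => isCompact_Icc).of_isClosed_subset isClosed_delta hsub

lemma isClosed_lam (κ : S → ℝ) : IsClosed (lam κ) := by
  have hF : Continuous fun μ : S → ℝ =>
      ∏ s ∈ Finset.univ.filter (fun s => 0 < κ s), (μ s) ^ (κ s) := by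
    apply continuous_finset_prod
    intro s hs
    rw [Finset.mem_filter] at hs
    exact (Real.continuous_rpow_const hs.2.le).comp (continuous_apply s)
  have hG : Continuous fun μ : S → ℝ =>
      ∏ s ∈ Finset.univ.filter (fun s => κ s < 0), (μ s) ^ (-(κ s)) := by
    apply continuous_finset_prod
    intro s hs
    rw [Finset.mem_filter] at hs
    exact (Real.continuous_rpow_const (by linarith [hs.2])).comp (continuous_apply s)
  exact isClosed_delta.inter (isClosed_eq hF hG)

lemma Lam_subset_delta (K : Submodule ℝ (S → ℝ)) :
    Lam (K : Set (S → ℝ)) ⊆ Delta S := by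
  intro μ hμ
  have := Set.mem_iInter₂.1 hμ 0 K.zero_mem
  exact this.1

lemma isClosed_Lam (K : Set (S → ℝ)) : IsClosed (Lam K) :=
  isClosed_biInter fun κ _ => isClosed_lam κ


/-- Perturbation lemma: an entropy maximizer vanishing somewhere on the positive
side of `κ` must vanish somewhere on the negative side. -/
lemma pert {m κ : S → ℝ} (hm : m ∈ Delta S) (hsum : ∑ s, κ s = 0)
    (hmax : ∀ t : ℝ, 0 < t → m + t • κ ∈ Delta S → Ent (m + t • κ) ≤ Ent m)
    {s0 : S} (hs0 : 0 < κ s0) (hm0 : m s0 = 0)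
    (hneg : ∀ r, κ r < 0 → 0 < m r) : False := by
  classical
  set Z : Finset S := Finset.univ.filter (fun s => m s = 0 ∧ κ s ≠ 0) with hZ
  have hZpos : ∀ s ∈ Z, 0 < κ s := by
    intro s hs
    rw [hZ, Finset.mem_filter] at hs
    rcases lt_or_gt_of_ne hs.2.2 with h | h
    · exact absurd hs.2.1 (ne_of_gt (hneg s h))
    · exact h
  have hs0Z : s0 ∈ Z := by
    rw [hZ, Finset.mem_filter]
    exact ⟨Finset.mem_univ _, hm0, ne_of_gt hs0⟩
  have hA : 0 < ∑ s ∈ Z, κ s :=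
    Finset.sum_pos hZpos ⟨s0, hs0Z⟩
  set A : ℝ := ∑ s ∈ Z, κ s with hA'
  set B : ℝ := ∑ s ∈ Z, (-(κ s) * Real.log (κ s)) with hB'
  set g : S → ℝ → ℝ := fun s t => Real.negMulLog (m s + t * κ s) - Real.negMulLog (m s)
    with hg
  set φ : ℝ → ℝ := fun t => (Ent (m + t • κ) - Ent m) / t with hφ
  have hφ_eq : ∀ t : ℝ, φ t = ∑ s, g s t / t := by
    intro t
    rw [hφ]
    simp only [Ent, Pi.add_apply, Pi.smul_apply, smul_eq_mul]
    rw [← Finset.sum_sub_distrib, Finset.sum_div]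
  -- main part of the slope on Z
  have hmain : ∀ t : ℝ, 0 < t →
      ∑ s ∈ Z, g s t / t = -Real.log t * A + B := by
    intro t ht
    have : ∀ s ∈ Z, g s t / t = -(κ s) * Real.log t + (-(κ s) * Real.log (κ s)) := by
      intro s hs
      have hms : m s = 0 := by
        rw [hZ, Finset.mem_filter] at hs; exact hs.2.1
      have hκs : 0 < κ s := hZpos s hs
      rw [hg]
      simp only [hms, zero_add, Real.negMulLog_zero, sub_zero]
      rw [Real.negMulLog, Real.log_mul (ne_of_gt ht) (ne_of_gt hκs)]
      field_simp
      ring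
    rw [Finset.sum_congr rfl this, Finset.sum_add_distrib, ← hB']
    congr 1
    rw [← Finset.sum_mul, hA']
    rw [Finset.sum_neg_distrib]
    ring
  -- the rest of the slope converges
  have hrest : ∃ D : ℝ, Tendsto (fun t => ∑ s ∈ Zᶜ, g s t / t) (𝓝[>] (0:ℝ)) (𝓝 D) := by
    have : ∀ s ∈ (Zᶜ : Finset S), ∃ d : ℝ,
        Tendsto (fun t => g s t / t) (𝓝[>] (0:ℝ)) (𝓝 d) := by
      intro s hs
      rw [Finset.mem_compl, hZ, Finset.mem_filter] at hs
      push_neg at hs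
      by_cases hκs : κ s = 0
      · refine ⟨0, ?_⟩
        have : (fun t : ℝ => g s t / t) = fun _ => 0 := by
          funext t
          rw [hg]; simp [hκs]
        rw [this]; exact tendsto_const_nhds
      · have hms : m s ≠ 0 := fun h => hκs (hs (Finset.mem_univ s) h)
        have hinner : HasDerivAt (fun t : ℝ => m s + t * κ s) (κ s) 0 := by
          simpa using ((hasDerivAt_id (0:ℝ)).mul_const (κ s)).const_add (m s)
        have hd : HasDerivAt (fun t : ℝ => Real.negMulLog (m s + t * κ s))
            ((-Real.log (m s) - 1) * κ s) 0 := by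
          have h1 : HasDerivAt Real.negMulLog (-Real.log (m s) - 1)
              ((fun t : ℝ => m s + t * κ s) 0) := by
            simpa using Real.hasDerivAt_negMulLog (x := m s) hms
          exact h1.comp (0:ℝ) hinner
        refine ⟨(-Real.log (m s) - 1) * κ s, ?_⟩
        have hslope := hasDerivAt_iff_tendsto_slope.1 hd
        have hmono : 𝓝[>] (0:ℝ) ≤ 𝓝[≠] (0:ℝ) :=
          nhdsWithin_mono _ (fun x hx => ne_of_gt hx)
        refine (hslope.mono_left hmono).congr' ?_
        filter_upwards [self_mem_nhdsWithin] with t ht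
        simp only [slope_def_field, div_eq_iff (ne_of_gt (show (0:ℝ) < t from ht))]
        rw [hg]
        simp only [zero_add]
        field_simp
        try ring_nf
    have htot : ∀ s : S, ∃ d : ℝ, s ∈ (Zᶜ : Finset S) →
        Tendsto (fun t => g s t / t) (𝓝[>] (0:ℝ)) (𝓝 d) := by
      intro s
      by_cases hs : s ∈ (Zᶜ : Finset S)
      · obtain ⟨d, hd⟩ := this s hs
        exact ⟨d, fun _ => hd⟩
      · exact ⟨0, fun h => absurd h hs⟩
    choose d hd using htot
    exact ⟨∑ s ∈ Zᶜ, d s, tendsto_finset_sum _ (fun s hs => hd s hs)⟩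
  obtain ⟨D, hD⟩ := hrest
  -- φ tends to +∞ along 𝓝[>] 0
  have hφ_top : Tendsto φ (𝓝[>] (0:ℝ)) atTop := by
    have hlogA : Tendsto (fun t : ℝ => -Real.log t * A + B) (𝓝[>] (0:ℝ)) atTop := by
      apply tendsto_atTop_add_const_right
      exact Tendsto.atTop_mul_const hA
        (tendsto_neg_atBot_atTop.comp Real.tendsto_log_nhdsGT_zero)
    have hsum_top : Tendsto (fun t : ℝ => (-Real.log t * A + B) + ∑ s ∈ Zᶜ, g s t / t)
        (𝓝[>] (0:ℝ)) atTop := by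
      apply tendsto_atTop_mono' _ _ (tendsto_atTop_add_const_right _ (D - 1) hlogA)
      filter_upwards [hD.eventually (eventually_ge_nhds (show D - 1 < D by linarith))]
        with t ht
      linarith
    apply hsum_top.congr'
    filter_upwards [self_mem_nhdsWithin] with t ht
    rw [hφ_eq t, ← hmain t ht, ← Finset.sum_add_sum_compl Z (fun s => g s t / t)]
  -- but φ is eventually nonpositive
  have hφ_nonpos : ∀ᶠ t in 𝓝[>] (0:ℝ), φ t ≤ 0 := by
    have hmem : ∀ᶠ t in 𝓝[>] (0:ℝ), m + t • κ ∈ Delta S := by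
      have hcoord : ∀ s : S, ∀ᶠ t in 𝓝[>] (0:ℝ), 0 ≤ m s + t * κ s := by
        intro s
        rcases le_or_gt 0 (κ s) with h | h
        · filter_upwards [self_mem_nhdsWithin] with t ht
          have : (0:ℝ) < t := ht
          have := hm.1 s
          nlinarith
        · have hms : 0 < m s := hneg s h
          have hcont : Tendsto (fun t : ℝ => m s + t * κ s) (𝓝[>] (0:ℝ)) (𝓝 (m s)) := by
            have h : Continuous (fun t : ℝ => m s + t * κ s) := by continuity
            have h2 := h.tendsto (0:ℝ)
            simp only [zero_mul, add_zero] at h2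
            exact h2.mono_left nhdsWithin_le_nhds
          filter_upwards [hcont.eventually (eventually_gt_nhds hms)] with t ht using ht.le
      have hall : ∀ᶠ t in 𝓝[>] (0:ℝ), ∀ s, 0 ≤ m s + t * κ s := eventually_all.2 hcoord
      filter_upwards [hall] with t ht
      refine ⟨fun s => by simpa using ht s, ?_⟩
      simp only [Pi.add_apply, Pi.smul_apply, smul_eq_mul]
      rw [Finset.sum_add_distrib, ← Finset.mul_sum, hsum, hm.2]
      ring
    filter_upwards [hmem, self_mem_nhdsWithin] with t htm ht
    have := hmax t ht htm
    rw [hφ]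
    apply div_nonpos_of_nonpos_of_nonneg <;> [linarith; exact le_of_lt ht]
  obtain ⟨t, h1, h2⟩ := (((hφ_top.eventually_gt_atTop 0).and hφ_nonpos)).exists
  linarith


/-- Interior criticality: at an entropy maximizer with full support on the
support of `κ`, the centrality equation holds. -/
lemma crit {m κ : S → ℝ} (hm : m ∈ Delta S) (hsum : ∑ s, κ s = 0)
    (hmax : ∀ t : ℝ, m + t • κ ∈ Delta S → Ent (m + t • κ) ≤ Ent m)
    (hpos : ∀ s, κ s ≠ 0 → 0 < m s) :
    ∏ s ∈ Finset.univ.filter (fun s => 0 < κ s), (m s) ^ (κ s) =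
    ∏ s ∈ Finset.univ.filter (fun s => κ s < 0), (m s) ^ (-(κ s)) := by
  classical
  set d : S → ℝ := fun s => if κ s = 0 then 0 else (-Real.log (m s) - 1) * κ s with hd
  set ψ : ℝ → ℝ := fun t => ∑ s, Real.negMulLog (m s + t * κ s) with hψ
  have hderiv : HasDerivAt ψ (∑ s, d s) 0 := by
    apply HasDerivAt.fun_sum
    intro s _
    by_cases hκs : κ s = 0
    · have heq : (fun t : ℝ => Real.negMulLog (m s + t * κ s))
          = fun _ => Real.negMulLog (m s) := by
        funext t; rw [hκs, mul_zero, add_zero]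
      rw [heq, hd]
      simp only [if_pos hκs]
      exact hasDerivAt_const _ _
    · have hms : m s ≠ 0 := ne_of_gt (hpos s hκs)
      have hinner : HasDerivAt (fun t : ℝ => m s + t * κ s) (κ s) 0 := by
        simpa using ((hasDerivAt_id (0:ℝ)).mul_const (κ s)).const_add (m s)
      have h1 : HasDerivAt Real.negMulLog (-Real.log (m s) - 1)
          ((fun t : ℝ => m s + t * κ s) 0) := by
        simpa using Real.hasDerivAt_negMulLog (x := m s) hms
      have := h1.comp (0:ℝ) hinner
      rw [hd]; simp only [hκs, if_neg hκs]
      exact this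
  -- local max at 0
  have hloc : IsLocalMax ψ 0 := by
    have hcoord : ∀ s : S, ∀ᶠ t in 𝓝 (0:ℝ), 0 ≤ m s + t * κ s := by
      intro s
      by_cases hκs : κ s = 0
      · filter_upwards with t; rw [hκs]; simpa using hm.1 s
      · have hms : 0 < m s := hpos s hκs
        have h : Continuous (fun t : ℝ => m s + t * κ s) := by continuity
        have h2 := h.tendsto (0:ℝ)
        simp only [zero_mul, add_zero] at h2
        filter_upwards [h2.eventually (eventually_gt_nhds hms)] with t ht using ht.le
    have hall : ∀ᶠ t in 𝓝 (0:ℝ), ∀ s, 0 ≤ m s + t * κ s := eventually_all.2 hcoord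
    filter_upwards [hall] with t ht
    have hmem : m + t • κ ∈ Delta S := by
      refine ⟨fun s => by simpa using ht s, ?_⟩
      simp only [Pi.add_apply, Pi.smul_apply, smul_eq_mul]
      rw [Finset.sum_add_distrib, ← Finset.mul_sum, hsum, hm.2]
      ring
    have := hmax t hmem
    have he : Ent (m + t • κ) = ψ t := by rw [hψ, Ent]; simp
    have h0 : Ent m = ψ 0 := by rw [hψ, Ent]; simp
    rw [he, h0] at this
    exact this
  have hD0 : ∑ s, d s = 0 := hloc.hasDerivAt_eq_zero hderiv
  -- turn into sum of logs
  have hlog : ∑ s ∈ Finset.univ.filter (fun s => κ s ≠ 0), κ s * Real.log (m s) = 0 := by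
    have h1 : ∑ s, d s = ∑ s ∈ Finset.univ.filter (fun s => κ s ≠ 0),
        (-Real.log (m s) - 1) * κ s := by
      rw [Finset.sum_filter]
      apply Finset.sum_congr rfl
      intro s _
      rw [hd]
      by_cases hκs : κ s = 0 <;> simp [hκs]
    have h2 : ∑ s ∈ Finset.univ.filter (fun s => κ s ≠ 0), κ s = 0 := by
      rw [Finset.sum_filter_of_ne (fun s _ h => h), hsum]
    rw [h1] at hD0
    have h3 : ∑ s ∈ Finset.univ.filter (fun s => κ s ≠ 0), (-Real.log (m s) - 1) * κ s
        = -(∑ s ∈ Finset.univ.filter (fun s => κ s ≠ 0), κ s * Real.log (m s))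
          - ∑ s ∈ Finset.univ.filter (fun s => κ s ≠ 0), κ s := by
      rw [← Finset.sum_neg_distrib, ← Finset.sum_sub_distrib]
      apply Finset.sum_congr rfl
      intro s _; ring
    rw [h3, h2] at hD0
    linarith
  -- split into positive and negative parts
  have hsplit : Finset.univ.filter (fun s => κ s ≠ 0)
      = Finset.univ.filter (fun s : S => 0 < κ s) ∪ Finset.univ.filter (fun s => κ s < 0) := by
    ext s
    simp only [Finset.mem_filter, Finset.mem_union, Finset.mem_univ, true_and]
    constructor
    · intro h; rcases lt_or_gt_of_ne h with h' | h'
      · exact Or.inr h'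
      · exact Or.inl h'
    · rintro (h | h)
      · exact ne_of_gt h
      · exact ne_of_lt h
  have hdisj : Disjoint (Finset.univ.filter (fun s : S => 0 < κ s))
      (Finset.univ.filter (fun s : S => κ s < 0)) := by
    rw [Finset.disjoint_filter]
    intro s _ h1 h2
    exact absurd h1 (not_lt.2 h2.le)
  have hsum_split : ∑ s ∈ Finset.univ.filter (fun s : S => 0 < κ s), κ s * Real.log (m s)
      = ∑ s ∈ Finset.univ.filter (fun s : S => κ s < 0), (-(κ s)) * Real.log (m s) := by
    have := hlog
    rw [hsplit, Finset.sum_union hdisj] at this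
    have h4 : ∑ s ∈ Finset.univ.filter (fun s : S => κ s < 0), (-(κ s)) * Real.log (m s)
        = -∑ s ∈ Finset.univ.filter (fun s : S => κ s < 0), κ s * Real.log (m s) := by
      rw [← Finset.sum_neg_distrib]
      exact Finset.sum_congr rfl (fun s _ => by ring)
    rw [h4]
    linarith
  have hL : ∏ s ∈ Finset.univ.filter (fun s : S => 0 < κ s), (m s) ^ (κ s)
      = Real.exp (∑ s ∈ Finset.univ.filter (fun s : S => 0 < κ s), κ s * Real.log (m s)) := by
    rw [Real.exp_sum]
    apply Finset.prod_congr rfl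
    intro s hs
    rw [Finset.mem_filter] at hs
    rw [Real.rpow_def_of_pos (hpos s (ne_of_gt hs.2)), mul_comm]
  have hR : ∏ s ∈ Finset.univ.filter (fun s : S => κ s < 0), (m s) ^ (-(κ s))
      = Real.exp (∑ s ∈ Finset.univ.filter (fun s : S => κ s < 0),
        (-(κ s)) * Real.log (m s)) := by
    rw [Real.exp_sum]
    apply Finset.prod_congr rfl
    intro s hs
    rw [Finset.mem_filter] at hs
    rw [Real.rpow_def_of_pos (hpos s (ne_of_lt hs.2)), mul_comm]
  rw [hL, hR, hsum_split]


/-- Uniqueness: two distributions both satisfying the centrality equation of their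
difference are equal. -/
lemma uniq {μ ν : S → ℝ} (hμ : μ ∈ lam (μ - ν)) (hν : ν ∈ lam (μ - ν)) : μ = ν := by
  classical
  obtain ⟨hμd, hμe⟩ := hμ
  obtain ⟨hνd, hνe⟩ := hν
  set κ : S → ℝ := μ - ν with hκ
  set P : Finset S := Finset.univ.filter (fun s => 0 < κ s) with hP
  set N : Finset S := Finset.univ.filter (fun s => κ s < 0) with hN
  have hκs : ∀ s, κ s = μ s - ν s := fun s => rfl
  have hμP : ∀ s ∈ P, 0 < μ s := by
    intro s hs
    rw [hP, Finset.mem_filter] at hs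
    have := hs.2; rw [hκs] at this
    have := hνd.1 s; linarith
  have hνN : ∀ s ∈ N, 0 < ν s := by
    intro s hs
    rw [hN, Finset.mem_filter] at hs
    have := hs.2; rw [hκs] at this
    have := hμd.1 s; linarith
  -- positivity of both sides of the equation for μ
  have hLμ : 0 < ∏ s ∈ P, (μ s) ^ (κ s) :=
    Finset.prod_pos fun s hs => Real.rpow_pos_of_pos (hμP s hs) _
  have hμN : ∀ s ∈ N, 0 < μ s := by
    intro s hs
    rcases lt_or_eq_of_le (hμd.1 s) with h | h
    · exact h
    · exfalso
      have hz : (μ s) ^ (-(κ s)) = 0 := by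
        rw [← h, Real.zero_rpow]
        rw [hN, Finset.mem_filter] at hs
        have := hs.2
        exact ne_of_gt (by linarith)
      have : ∏ s ∈ N, (μ s) ^ (-(κ s)) = 0 := Finset.prod_eq_zero hs hz
      rw [← hμe] at this
      exact absurd this (ne_of_gt hLμ)
  have hRν : 0 < ∏ s ∈ N, (ν s) ^ (-(κ s)) :=
    Finset.prod_pos fun s hs => Real.rpow_pos_of_pos (hνN s hs) _
  have hνP : ∀ s ∈ P, 0 < ν s := by
    intro s hs
    rcases lt_or_eq_of_le (hνd.1 s) with h | h
    · exact h
    · exfalso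
      have hz : (ν s) ^ (κ s) = 0 := by
        rw [← h, Real.zero_rpow]
        rw [hP, Finset.mem_filter] at hs
        exact ne_of_gt hs.2
      have : ∏ s ∈ P, (ν s) ^ (κ s) = 0 := Finset.prod_eq_zero hs hz
      rw [hνe] at this
      exact absurd this (ne_of_gt hRν)
  -- take logs
  have hlog : ∀ (f : S → ℝ), (∀ s ∈ P, 0 < f s) → (∀ s ∈ N, 0 < f s) →
      (∏ s ∈ P, (f s) ^ (κ s) = ∏ s ∈ N, (f s) ^ (-(κ s))) →
      ∑ s ∈ P, κ s * Real.log (f s) = ∑ s ∈ N, (-(κ s)) * Real.log (f s) := by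
    intro f hfP hfN he
    have h1 : Real.log (∏ s ∈ P, (f s) ^ (κ s)) = ∑ s ∈ P, κ s * Real.log (f s) := by
      rw [Real.log_prod]
      · exact Finset.sum_congr rfl fun s hs => by
          rw [Real.log_rpow (hfP s hs)]
      · exact fun s hs => ne_of_gt (Real.rpow_pos_of_pos (hfP s hs) _)
    have h2 : Real.log (∏ s ∈ N, (f s) ^ (-(κ s))) = ∑ s ∈ N, (-(κ s)) * Real.log (f s) := by
      rw [Real.log_prod]
      · exact Finset.sum_congr rfl fun s hs => by
          rw [Real.log_rpow (hfN s hs)]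
      · exact fun s hs => ne_of_gt (Real.rpow_pos_of_pos (hfN s hs) _)
    rw [← h1, ← h2, he]
  have Eμ := hlog μ hμP hμN hμe
  have Eν := hlog ν hνP hνN hνe
  -- the sum of strictly positive terms is zero ⇒ P ∪ N empty
  have hPN : P ∪ N = ∅ := by
    by_contra hne
    obtain ⟨s1, hs1⟩ := Finset.nonempty_iff_ne_empty.2 hne
    have hpos : ∀ s ∈ P ∪ N, 0 < κ s * (Real.log (μ s) - Real.log (ν s)) := by
      intro s hs
      rcases Finset.mem_union.1 hs with h | h
      · have hκpos : 0 < κ s := by rw [hP, Finset.mem_filter] at h; exact h.2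
        have h1 : ν s < μ s := by have := hκs s; nlinarith [hκpos]
        have := Real.log_lt_log (hνP s h) h1
        nlinarith
      · have hκneg : κ s < 0 := by rw [hN, Finset.mem_filter] at h; exact h.2
        have h1 : μ s < ν s := by have := hκs s; nlinarith [hκneg]
        have := Real.log_lt_log (hμN s h) h1
        nlinarith
    have hdisj : Disjoint P N := by
      rw [hP, hN, Finset.disjoint_filter]
      intro s _ h1 h2
      exact absurd h1 (not_lt.2 h2.le)
    have hzero : ∑ s ∈ P ∪ N, κ s * (Real.log (μ s) - Real.log (ν s)) = 0 := by
      rw [Finset.sum_union hdisj]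
      have e1 : ∑ s ∈ P, κ s * (Real.log (μ s) - Real.log (ν s))
          = ∑ s ∈ P, κ s * Real.log (μ s) - ∑ s ∈ P, κ s * Real.log (ν s) := by
        rw [← Finset.sum_sub_distrib]; exact Finset.sum_congr rfl fun s _ => by ring
      have e2 : ∑ s ∈ N, κ s * (Real.log (μ s) - Real.log (ν s))
          = ∑ s ∈ N, (-(κ s)) * Real.log (ν s) - ∑ s ∈ N, (-(κ s)) * Real.log (μ s) := by
        rw [← Finset.sum_sub_distrib]; exact Finset.sum_congr rfl fun s _ => by ring
      rw [e1, e2]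
      linarith
    have := Finset.sum_pos hpos ⟨s1, hs1⟩
    linarith
  funext s
  have hs : s ∉ P ∪ N := by rw [hPN]; exact Finset.notMem_empty s
  rw [Finset.mem_union, hP, hN, Finset.mem_filter, Finset.mem_filter] at hs
  push_neg at hs
  have h1 := hs.1 (Finset.mem_univ s)
  have h2 := hs.2 (Finset.mem_univ s)
  have h0 : κ s = 0 := le_antisymm h1 h2
  rw [hκs] at h0
  linarith

/-- Existence of a representative of each fiber in `Λ_K`, interior if possible. -/
lemma exists_rep {Q : Type*} [NormedAddCommGroup Q] [NormedSpace ℝ Q]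
    (K : Submodule ℝ (S → ℝ)) (hKV : (K : Set (S → ℝ)) ⊆ V0 S)
    (ρ : (S → ℝ) →ₗ[ℝ] Q) (hker : LinearMap.ker ρ = K)
    {μ0 : S → ℝ} (hμ0 : μ0 ∈ Delta S) :
    ∃ m ∈ Lam (K : Set (S → ℝ)), ρ m = ρ μ0 ∧
      (∀ ν, ν ∈ intDelta S → ρ ν = ρ μ0 → m ∈ intDelta S) := by
  classical
  have hρc : Continuous ρ := ρ.continuous_of_finiteDimensional
  set F : Set (S → ℝ) := Delta S ∩ ρ ⁻¹' {ρ μ0} with hF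
  have hFc : IsCompact F :=
    isCompact_delta.inter_right (isClosed_singleton.preimage hρc)
  have hFne : F.Nonempty := ⟨μ0, hμ0, rfl⟩
  obtain ⟨m, hmF, hmax⟩ := hFc.exists_isMaxOn hFne continuous_Ent.continuousOn
  have hmΔ : m ∈ Delta S := hmF.1
  have hmρ : ρ m = ρ μ0 := hmF.2
  -- maximality along perturbations in the kernel
  have hmax' : ∀ κ : S → ℝ, ρ κ = 0 → ∀ t : ℝ, m + t • κ ∈ Delta S →
      Ent (m + t • κ) ≤ Ent m := by
    intro κ hκ t hmem
    apply hmax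
    refine ⟨hmem, ?_⟩
    simp only [Set.mem_preimage, Set.mem_singleton_iff, map_add, map_smul, hκ, smul_zero,
      add_zero, hmρ]
  have hκsum : ∀ κ : S → ℝ, κ ∈ K → ∑ s, κ s = 0 := fun κ hκ => hKV hκ
  have hκker : ∀ κ : S → ℝ, κ ∈ K → ρ κ = 0 := by
    intro κ hκ
    have : κ ∈ LinearMap.ker ρ := by rw [hker]; exact hκ
    exact this
  -- zero transfer
  have htrans : ∀ κ : S → ℝ, ρ κ = 0 → ∑ s, κ s = 0 →
      ∀ s0, 0 < κ s0 → m s0 = 0 → ∃ r, κ r < 0 ∧ m r = 0 := by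
    intro κ hκρ hκsum s0 hs0 hm0
    by_contra hne
    push_neg at hne
    have hneg : ∀ r, κ r < 0 → 0 < m r := by
      intro r hr
      rcases lt_or_eq_of_le (hmΔ.1 r) with h | h
      · exact h
      · exact absurd h.symm (hne r hr)
    exact pert hmΔ hκsum (fun t ht => hmax' κ hκρ t) hs0 hm0 hneg
  refine ⟨m, ?_, hmρ, ?_⟩
  · -- m ∈ Lam K
    apply Set.mem_iInter₂.2
    intro κ hκ
    refine ⟨hmΔ, ?_⟩
    by_cases hcase : ∀ s, κ s ≠ 0 → 0 < m s
    · exact crit hmΔ (hκsum κ hκ) (hmax' κ (hκker κ hκ)) hcase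
    · push_neg at hcase
      obtain ⟨s1, hs1ne, hs1⟩ := hcase
      have hms1 : m s1 = 0 := le_antisymm hs1 (hmΔ.1 s1)
      have hzero : (∃ s, 0 < κ s ∧ m s = 0) ∧ (∃ r, κ r < 0 ∧ m r = 0) := by
        rcases lt_or_gt_of_ne hs1ne with h | h
        · -- κ s1 < 0 : apply transfer to -κ
          have h2 := htrans (-κ) (by rw [map_neg, hκker κ hκ, neg_zero])
            (by simp only [Pi.neg_apply]; rw [Finset.sum_neg_distrib, hκsum κ hκ, neg_zero])
            s1 (by simpa using h) hms1
          obtain ⟨r, hr1, hr2⟩ := h2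
          exact ⟨⟨r, by simpa using hr1, hr2⟩, ⟨s1, h, hms1⟩⟩
        · have h2 := htrans κ (hκker κ hκ) (hκsum κ hκ) s1 h hms1
          exact ⟨⟨s1, h, hms1⟩, h2⟩
      obtain ⟨⟨sp, hsp, hsp0⟩, ⟨sn, hsn, hsn0⟩⟩ := hzero
      have hL : ∏ s ∈ Finset.univ.filter (fun s => 0 < κ s), (m s) ^ (κ s) = 0 :=
        Finset.prod_eq_zero (Finset.mem_filter.2 ⟨Finset.mem_univ _, hsp⟩)
          (by rw [hsp0, Real.zero_rpow (ne_of_gt hsp)])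
      have hR : ∏ s ∈ Finset.univ.filter (fun s => κ s < 0), (m s) ^ (-(κ s)) = 0 :=
        Finset.prod_eq_zero (Finset.mem_filter.2 ⟨Finset.mem_univ _, hsn⟩)
          (by rw [hsn0, Real.zero_rpow (ne_of_gt (by linarith))])
      rw [hL, hR]
  · -- interior case
    intro ν hν hνρ
    refine ⟨?_, hmΔ.2⟩
    intro s
    by_contra hs
    have hms : m s = 0 := le_antisymm (not_lt.1 hs) (hmΔ.1 s)
    set κ : S → ℝ := ν - m with hκ
    have hκρ : ρ κ = 0 := by rw [hκ, map_sub, hνρ, hmρ, sub_self]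
    have hκsum' : ∑ r, κ r = 0 := by
      rw [hκ]
      simp only [Pi.sub_apply]
      rw [Finset.sum_sub_distrib, hν.2, hmΔ.2, sub_self]
    have hs0 : 0 < κ s := by
      rw [hκ]; simp only [Pi.sub_apply, hms, sub_zero]; exact hν.1 s
    have hneg : ∀ r, κ r < 0 → 0 < m r := by
      intro r hr
      rw [hκ] at hr
      simp only [Pi.sub_apply, sub_neg] at hr
      exact lt_trans (hν.1 r) hr
    exact pert hmΔ hκsum' (fun t ht => hmax' κ hκρ t) hs0 hms hneg


/-- The coordinate-sum linear functional. -/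
def sumL (S : Type*) [Fintype S] : (S → ℝ) →ₗ[ℝ] ℝ where
  toFun v := ∑ s, v s
  map_add' u v := by simp [Finset.sum_add_distrib]
  map_smul' c v := by simp [Finset.mul_sum]

lemma ri_eq {Q : Type*} [NormedAddCommGroup Q] [NormedSpace ℝ Q]
    (ρ : (S → ℝ) →ₗ[ℝ] Q) (hsurj : Function.Surjective ρ)
    (hsum_ker : ∀ v, ρ v = 0 → ∑ s, v s = 0) :
    intrinsicInterior ℝ (ρ '' Delta S) = ρ '' intDelta S := by
  classical
  haveI : FiniteDimensional ℝ Q := Module.Finite.of_surjective ρ hsurj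
  have hρc : Continuous ρ := ρ.continuous_of_finiteDimensional
  set ρ' : (S → ℝ) →L[ℝ] Q := ⟨ρ, hρc⟩ with hρ'
  have hopenmap : IsOpenMap ρ := ρ'.isOpenMap hsurj
  set P : Set Q := ρ '' Delta S with hPdef
  -- the sum functional factors through ρ
  obtain ⟨g, hg⟩ := ρ.exists_rightInverse_of_surjective (LinearMap.range_eq_top.2 hsurj)
  have hg' : ∀ x, ρ (g x) = x := fun x => LinearMap.ext_iff.1 hg x
  set σ : Q →ₗ[ℝ] ℝ := (sumL S).comp g with hσdef
  have hσ : ∀ v, σ (ρ v) = ∑ s, v s := by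
    intro v
    have h0 : ρ (g (ρ v) - v) = 0 := by rw [map_sub, hg', sub_self]
    have h1 := hsum_ker _ h0
    simp only [Pi.sub_apply] at h1
    rw [Finset.sum_sub_distrib] at h1
    have : σ (ρ v) = ∑ s, g (ρ v) s := rfl
    rw [this]
    linarith
  -- σ = 1 on the affine span of P
  have hσspan : ∀ x ∈ affineSpan ℝ P, σ x = 1 := by
    set T : AffineSubspace ℝ Q :=
      { carrier := {x | σ x = 1}
        smul_vsub_vadd_mem' := by
          intro c p1 p2 p3 h1 h2 h3
          simp only [Set.mem_setOf_eq] at h1 h2 h3 ⊢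
          rw [vsub_eq_sub, vadd_eq_add, map_add, map_smul, map_sub, h1, h2, h3]
          simp } with hT
    have hPT : P ⊆ (T : Set Q) := by
      rintro x ⟨μ, hμ, rfl⟩
      show σ (ρ μ) = 1
      rw [hσ, hμ.2]
    intro x hx
    exact (affineSpan_le.2 hPT : affineSpan ℝ P ≤ T) hx
  -- the set of images of strictly positive vectors
  set U : Set Q := ρ '' {v | ∀ s, 0 < v s} with hU
  have hUopen : IsOpen U := by
    apply hopenmap
    have : {v : S → ℝ | ∀ s, 0 < v s} = ⋂ s, (fun v : S → ℝ => v s) ⁻¹' Set.Ioi 0 := by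
      ext v; simp
    rw [this]
    exact isOpen_iInter_of_finite fun s => (isOpen_Ioi).preimage (continuous_apply s)
  have hkey : ∀ x ∈ affineSpan ℝ P, x ∈ U → x ∈ ρ '' intDelta S := by
    rintro x hx ⟨v, hv, rfl⟩
    exact ⟨v, ⟨hv, by rw [← hσ v]; exact hσspan _ hx⟩, rfl⟩
  apply Set.Subset.antisymm
  · -- intrinsicInterior ⊆ ρ '' intDelta
    intro x hx
    obtain ⟨y, hy, rfl⟩ := mem_intrinsicInterior.1 hx
    have hxP : (y : Q) ∈ P := intrinsicInterior_subset hx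
    obtain ⟨μ1, hμ1, hμ1x⟩ := id hxP
    haveI : Nonempty S := by
      by_contra h
      rw [not_nonempty_iff] at h
      have := hμ1.2
      rw [Finset.univ_eq_empty, Finset.sum_empty] at this
      norm_num at this
    have hcard : (0:ℝ) < (Fintype.card S : ℝ) := by
      have := Fintype.card_pos (α := S)
      positivity
    set u : S → ℝ := fun _ => 1 / (Fintype.card S : ℝ) with hu
    have huint : u ∈ intDelta S := by
      constructor
      · intro s; rw [hu]; positivity
      · rw [hu]
        simp only [Finset.sum_const, Finset.card_univ, nsmul_eq_mul]
        field_simp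
    set p : Q := ρ u with hp
    have hpP : p ∈ P := ⟨u, ⟨fun s => (huint.1 s).le, huint.2⟩, rfl⟩
    set x : Q := (y : Q) with hxdef
    have hxspan : x ∈ affineSpan ℝ P := subset_affineSpan ℝ P hxP
    have hpspan : p ∈ affineSpan ℝ P := subset_affineSpan ℝ P hpP
    have hline : ∀ t : ℝ, x + t • (x - p) ∈ affineSpan ℝ P := by
      intro t
      have := AffineSubspace.smul_vsub_vadd_mem (affineSpan ℝ P) t hxspan hpspan hxspan
      rwa [vsub_eq_sub, vadd_eq_add, add_comm] at this
    set c : ℝ → affineSpan ℝ P := fun t => ⟨x + t • (x - p), hline t⟩ with hc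
    have hcc : Continuous c := by
      apply Continuous.subtype_mk
      exact continuous_const.add (continuous_id.smul continuous_const)
    have hc0 : c 0 = y := by
      apply Subtype.ext
      simp [hc]
      exact hxdef
    have hev : ∀ᶠ t in 𝓝 (0:ℝ), c t ∈ interior ((↑) ⁻¹' P : Set (affineSpan ℝ P)) := by
      have : c ⁻¹' (interior ((↑) ⁻¹' P : Set (affineSpan ℝ P))) ∈ 𝓝 (0:ℝ) := by
        apply (isOpen_interior.preimage hcc).mem_nhds
        rw [Set.mem_preimage, hc0]
        exact hy
      exact this
    obtain ⟨t, htO, ht⟩ := (hev.filter_mono (nhdsWithin_le_nhds (s := Set.Ioi (0:ℝ)))).and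
      self_mem_nhdsWithin |>.exists
    have htpos : (0:ℝ) < t := ht
    have hq' : x + t • (x - p) ∈ P := by
      have h := interior_subset htO
      exact h
    obtain ⟨ν', hν', hν'x⟩ := hq'
    have h1t : (0:ℝ) < 1 + t := by linarith
    set ν : S → ℝ := (1/(1+t)) • ν' + (t/(1+t)) • u with hν
    have hνint : ν ∈ intDelta S := by
      constructor
      · intro s
        rw [hν]
        simp only [Pi.add_apply, Pi.smul_apply, smul_eq_mul]
        have h1 : 0 ≤ 1/(1+t) * ν' s := by
          apply mul_nonneg (by positivity) (hν'.1 s)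
        have h2 : 0 < t/(1+t) * u s := by
          apply mul_pos (by positivity) (huint.1 s)
        linarith
      · rw [hν]
        simp only [Pi.add_apply, Pi.smul_apply, smul_eq_mul]
        rw [Finset.sum_add_distrib, ← Finset.mul_sum, ← Finset.mul_sum, hν'.2, huint.2]
        field_simp
    refine ⟨ν, hνint, ?_⟩
    rw [hν, map_add, map_smul, map_smul, hν'x, ← hp]
    have : (1/(1+t)) • (x + t • (x - p)) + (t/(1+t)) • p = x := by
      have hne : (1+t) ≠ 0 := ne_of_gt h1t
      match_scalars <;> field_simp <;> ring
    rw [this]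
  · -- ρ '' intDelta ⊆ intrinsicInterior
    rintro x ⟨v, hv, rfl⟩
    have hxP : ρ v ∈ P := ⟨v, ⟨fun s => (hv.1 s).le, hv.2⟩, rfl⟩
    have hxspan : ρ v ∈ affineSpan ℝ P := subset_affineSpan ℝ P hxP
    rw [mem_intrinsicInterior]
    refine ⟨⟨ρ v, hxspan⟩, ?_, rfl⟩
    have hsub : ((↑) ⁻¹' U : Set (affineSpan ℝ P)) ⊆ ((↑) ⁻¹' P : Set (affineSpan ℝ P)) := by
      intro w hw
      obtain ⟨μ, hμ, hμw⟩ := hkey (w : Q) w.2 hw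
      exact Set.mem_preimage.2 ⟨μ, ⟨fun s => (hμ.1 s).le, hμ.2⟩, hμw⟩
    apply interior_maximal hsub (hUopen.preimage continuous_subtype_val)
    exact ⟨v, hv.1, rfl⟩


end BirchAux

/-- if `K` is a linear subspace of `V₀`, the quotient map
`ρ : ℝ^S → ℝ^S/K` (realized as a surjective linear map with kernel `K`) restricts
to a homeomorphism from `Λ_K` onto the polytope `ρ(Δ_S)`, carrying `Λ_K ∩ ∂Δ_S`
onto the relative boundary and `Λ_K ∩ int(Δ_S)` onto the relative interior. -/
theorem quotient_restriction_homeo_Lam (S : Type*) [Fintype S]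
    (K : Submodule ℝ (S → ℝ)) (hKV : (K : Set (S → ℝ)) ⊆ V0 S)
    (Q : Type*) [NormedAddCommGroup Q] [NormedSpace ℝ Q]
    (ρ : (S → ℝ) →ₗ[ℝ] Q) (hker : LinearMap.ker ρ = K)
    (hsurj : Function.Surjective ρ) :
    (∃ h : ↥(Lam (K : Set (S → ℝ))) ≃ₜ ↥(ρ '' Delta S),
        ∀ x : ↥(Lam (K : Set (S → ℝ))), (h x : Q) = ρ x) ∧
    ρ '' (Lam (K : Set (S → ℝ)) ∩ {μ ∈ Delta S | ∃ s, μ s = 0}) =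
      intrinsicFrontier ℝ (ρ '' Delta S) ∧
    ρ '' (Lam (K : Set (S → ℝ)) ∩ intDelta S) =
      intrinsicInterior ℝ (ρ '' Delta S) := by
  classical
  haveI : FiniteDimensional ℝ Q := Module.Finite.of_surjective ρ hsurj
  have hρc : Continuous ρ := ρ.continuous_of_finiteDimensional
  have hΛΔ : Lam (K : Set (S → ℝ)) ⊆ Delta S := BirchAux.Lam_subset_delta K
  have hK : ∀ v : S → ℝ, ρ v = 0 → v ∈ (K : Set (S → ℝ)) := by
    intro v hv
    have : v ∈ LinearMap.ker ρ := LinearMap.mem_ker.2 hv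
    rwa [hker] at this
  have hinj : Set.InjOn ρ (Lam (K : Set (S → ℝ))) := by
    intro μ hμ ν hν he
    have hκK : μ - ν ∈ (K : Set (S → ℝ)) := hK _ (by rw [map_sub, he, sub_self])
    exact BirchAux.uniq (Set.mem_iInter₂.1 hμ _ hκK) (Set.mem_iInter₂.1 hν _ hκK)
  have hsum_ker : ∀ v : S → ℝ, ρ v = 0 → ∑ s, v s = 0 := fun v hv => hKV (hK v hv)
  have honto : ρ '' Lam (K : Set (S → ℝ)) = ρ '' Delta S := by
    apply Set.Subset.antisymm (Set.image_mono hΛΔ)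
    rintro x ⟨μ0, hμ0, rfl⟩
    obtain ⟨m, hmΛ, hmρ, -⟩ := BirchAux.exists_rep K hKV ρ hker hμ0
    exact ⟨m, hmΛ, hmρ⟩
  have hri : intrinsicInterior ℝ (ρ '' Delta S) = ρ '' intDelta S :=
    BirchAux.ri_eq ρ hsurj hsum_ker
  have hint : ρ '' (Lam (K : Set (S → ℝ)) ∩ intDelta S)
      = intrinsicInterior ℝ (ρ '' Delta S) := by
    rw [hri]
    apply Set.Subset.antisymm (Set.image_mono Set.inter_subset_right)
    rintro x ⟨ν, hν, rfl⟩
    have hνΔ : ν ∈ Delta S := ⟨fun s => (hν.1 s).le, hν.2⟩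
    obtain ⟨m, hmΛ, hmρ, hmint⟩ := BirchAux.exists_rep K hKV ρ hker hνΔ
    exact ⟨m, ⟨hmΛ, hmint ν hν rfl⟩, hmρ⟩
  refine ⟨?_, ?_, hint⟩
  · -- the homeomorphism
    haveI : CompactSpace ↥(Lam (K : Set (S → ℝ))) := by
      rw [← isCompact_iff_compactSpace]
      exact BirchAux.isCompact_delta.of_isClosed_subset (BirchAux.isClosed_Lam _) hΛΔ
    have hmapmem : ∀ x : ↥(Lam (K : Set (S → ℝ))), ρ ↑x ∈ ρ '' Delta S :=
      fun x => ⟨↑x, hΛΔ x.2, rfl⟩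
    set f : ↥(Lam (K : Set (S → ℝ))) → ↥(ρ '' Delta S) := fun x => ⟨ρ ↑x, hmapmem x⟩
      with hf
    have hbij : Function.Bijective f := by
      constructor
      · intro x y hxy
        exact Subtype.ext (hinj x.2 y.2 (congrArg Subtype.val hxy))
      · rintro ⟨q, hq⟩
        rw [← honto] at hq
        obtain ⟨μ, hμ, hμq⟩ := hq
        exact ⟨⟨μ, hμ⟩, Subtype.ext hμq⟩
    have hfc : Continuous f := (hρc.comp continuous_subtype_val).subtype_mk _
    have hec : Continuous (Equiv.ofBijective f hbij) := hfc
    exact ⟨Continuous.homeoOfEquivCompactToT2 hec, fun x => rfl⟩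
  · -- the frontier
    have hPc : IsCompact (ρ '' Delta S) := BirchAux.isCompact_delta.image hρc
    rw [← closure_diff_intrinsicInterior, hPc.isClosed.closure_eq]
    have hZeq : Lam (K : Set (S → ℝ)) ∩ {μ ∈ Delta S | ∃ s, μ s = 0}
        = Lam (K : Set (S → ℝ)) \ (Lam (K : Set (S → ℝ)) ∩ intDelta S) := by
      ext μ
      constructor
      · rintro ⟨hμΛ, hμΔ, s, hs⟩
        refine ⟨hμΛ, fun h => ?_⟩
        have := h.2.1 s
        linarith
      · rintro ⟨hμΛ, hμn⟩
        have hμΔ := hΛΔ hμΛ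
        refine ⟨hμΛ, hμΔ, ?_⟩
        by_contra h
        push_neg at h
        exact hμn ⟨hμΛ, fun s => lt_of_le_of_ne (hμΔ.1 s) (Ne.symm (h s)), hμΔ.2⟩
    rw [hZeq]
    apply Set.Subset.antisymm
    · rintro x ⟨μ, ⟨hμΛ, hμn⟩, rfl⟩
      refine ⟨⟨μ, hΛΔ hμΛ, rfl⟩, ?_⟩
      intro hx
      rw [← hint] at hx
      obtain ⟨w, hw, hwx⟩ := hx
      have hwμ : w = μ := hinj hw.1 hμΛ hwx
      rw [hwμ] at hw
      exact hμn hw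
    · rintro x ⟨hxP, hxn⟩
      rw [← honto] at hxP
      obtain ⟨μ, hμΛ, rfl⟩ := hxP
      refine ⟨μ, ⟨hμΛ, fun h => hxn ?_⟩, rfl⟩
      rw [← hint]
      exact ⟨μ, h, rfl⟩
end
end

section
/- There exists a set K of integer vectors in V₀ (not a subgroup) for which Λ_K is not connected: for S = {1,2,3} and K = {(1,1,−2),(1,−2,1)}, the set Λ_K consists exactly of the two points (1/3,1/3,1/3) and (1,0,0). -/
open scoped BigOperators

noncomputable section

section ProofAux

private lemma mem_lam1 (μ : Fin 3 → ℝ) :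
    μ ∈ lam ![(1:ℝ), 1, -2] ↔ μ ∈ Delta (Fin 3) ∧ μ 0 * μ 1 = μ 2 ^ 2 := by
  have hp : Finset.univ.filter (fun s => (0:ℝ) < ![(1:ℝ),1,-2] s) = {0,1} := by
    ext s; fin_cases s <;> simp
  have hn : Finset.univ.filter (fun s => (![(1:ℝ),1,-2]) s < 0) = {2} := by
    ext s; fin_cases s <;> simp
  simp only [lam, Set.mem_setOf_eq, hp, hn, Finset.prod_insert, Finset.mem_singleton,
    Finset.prod_singleton]
  constructor
  · rintro ⟨h, he⟩
    refine ⟨h, ?_⟩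
    rw [Finset.prod_pair (by decide)] at he
    simpa [Real.rpow_one, show (-(-2:ℝ)) = ((2:ℕ):ℝ) by norm_num, Real.rpow_natCast,
      Matrix.cons_val_zero, Matrix.cons_val_one, Matrix.head_cons] using he
  · rintro ⟨h, he⟩
    refine ⟨h, ?_⟩
    rw [Finset.prod_pair (by decide)]
    simpa [Real.rpow_one, show (-(-2:ℝ)) = ((2:ℕ):ℝ) by norm_num, Real.rpow_natCast,
      Matrix.cons_val_zero, Matrix.cons_val_one, Matrix.head_cons] using he

private lemma mem_lam2 (μ : Fin 3 → ℝ) :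
    μ ∈ lam ![(1:ℝ), -2, 1] ↔ μ ∈ Delta (Fin 3) ∧ μ 0 * μ 2 = μ 1 ^ 2 := by
  have hp : Finset.univ.filter (fun s => (0:ℝ) < ![(1:ℝ),-2,1] s) = {0,2} := by
    ext s; fin_cases s <;> simp
  have hn : Finset.univ.filter (fun s => (![(1:ℝ),-2,1]) s < 0) = {1} := by
    ext s; fin_cases s <;> simp
  simp only [lam, Set.mem_setOf_eq, hp, hn, Finset.prod_singleton]
  constructor
  · rintro ⟨h, he⟩
    refine ⟨h, ?_⟩
    rw [Finset.prod_pair (by decide)] at he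
    simpa [Real.rpow_one, show (-(-2:ℝ)) = ((2:ℕ):ℝ) by norm_num, Real.rpow_natCast,
      Matrix.cons_val_zero, Matrix.cons_val_one, Matrix.head_cons] using he
  · rintro ⟨h, he⟩
    refine ⟨h, ?_⟩
    rw [Finset.prod_pair (by decide)]
    simpa [Real.rpow_one, show (-(-2:ℝ)) = ((2:ℕ):ℝ) by norm_num, Real.rpow_natCast,
      Matrix.cons_val_zero, Matrix.cons_val_one, Matrix.head_cons] using he

private lemma lam_eq_pair :
    Lam ({![(1:ℝ), 1, -2], ![(1:ℝ), -2, 1]} : Set (Fin 3 → ℝ)) =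
      {![(1:ℝ)/3, 1/3, 1/3], ![(1:ℝ), 0, 0]} := by
  ext μ
  simp only [Lam, Set.mem_insert_iff, Set.mem_iInter, Set.mem_singleton_iff]
  constructor
  · intro h
    have h1 := (mem_lam1 μ).1 (h _ (Or.inl rfl))
    have h2 := (mem_lam2 μ).1 (h _ (Or.inr rfl))
    obtain ⟨⟨hpos, hsum⟩, he1⟩ := h1
    obtain ⟨_, he2⟩ := h2
    rw [Fin.sum_univ_three] at hsum
    have h12 : μ 1 = μ 2 := by
      have : (μ 1 - μ 2) * (μ 0 + μ 1 + μ 2) = 0 := by linear_combination he1 - he2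
      rw [hsum, mul_one] at this
      linarith
    have hcase : μ 1 = 0 ∨ μ 0 = μ 1 := by
      rcases mul_eq_zero.1 (show μ 1 * (μ 0 - μ 1) = 0 by
        linear_combination he1 - (μ 1 + μ 2) * h12) with h | h
      · exact Or.inl h
      · exact Or.inr (by linarith)
    rcases hcase with h | h
    · right
      funext s
      fin_cases s <;> simp <;> linarith
    · left
      funext s
      fin_cases s <;> simp <;> linarith
  · rintro (rfl | rfl) <;> intro κ hκ <;> rcases hκ with rfl | rfl
    · exact (mem_lam1 _).2 ⟨⟨fun s => by fin_cases s <;> norm_num,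
        by rw [Fin.sum_univ_three]; norm_num [Matrix.cons_val_two, Matrix.tail_cons, Matrix.head_cons]⟩, by norm_num [Matrix.cons_val_two, Matrix.tail_cons, Matrix.head_cons]⟩
    · exact (mem_lam2 _).2 ⟨⟨fun s => by fin_cases s <;> norm_num,
        by rw [Fin.sum_univ_three]; norm_num [Matrix.cons_val_two, Matrix.tail_cons, Matrix.head_cons]⟩, by norm_num [Matrix.cons_val_two, Matrix.tail_cons, Matrix.head_cons]⟩
    · exact (mem_lam1 _).2 ⟨⟨fun s => by fin_cases s <;> norm_num,
        by rw [Fin.sum_univ_three]; norm_num [Matrix.cons_val_two, Matrix.tail_cons, Matrix.head_cons]⟩, by norm_num [Matrix.cons_val_two, Matrix.tail_cons, Matrix.head_cons]⟩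
    · exact (mem_lam2 _).2 ⟨⟨fun s => by fin_cases s <;> norm_num,
        by rw [Fin.sum_univ_three]; norm_num [Matrix.cons_val_two, Matrix.tail_cons, Matrix.head_cons]⟩, by norm_num [Matrix.cons_val_two, Matrix.tail_cons, Matrix.head_cons]⟩

end ProofAux

/-- for `S = {1,2,3}` and `K = {(1,1,-2), (1,-2,1)}` (a set of integer
vectors in `V₀` which is not a subgroup), the set `Λ_K` consists exactly of the two
points `(1/3,1/3,1/3)` and `(1,0,0)`; in particular it is not connected. -/
theorem Lam_two_vectors_eq_pair :
    Lam ({![(1:ℝ), 1, -2], ![(1:ℝ), -2, 1]} : Set (Fin 3 → ℝ)) =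
      {![(1:ℝ)/3, 1/3, 1/3], ![(1:ℝ), 0, 0]} ∧
    ¬ IsPreconnected (Lam ({![(1:ℝ), 1, -2], ![(1:ℝ), -2, 1]} : Set (Fin 3 → ℝ))) := by
  refine ⟨lam_eq_pair, ?_⟩
  rw [lam_eq_pair]
  intro hpc
  set u : Set (Fin 3 → ℝ) := {x | x 0 < 1/2} with hu
  set v : Set (Fin 3 → ℝ) := {x | 1/2 < x 0} with hv
  have hou : IsOpen u := isOpen_lt (continuous_apply 0) continuous_const
  have hov : IsOpen v := isOpen_lt continuous_const (continuous_apply 0)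
  have hcover : ({![(1:ℝ)/3, 1/3, 1/3], ![(1:ℝ), 0, 0]} : Set (Fin 3 → ℝ)) ⊆ u ∪ v := by
    rintro x (rfl | rfl)
    · left; simp [hu]; norm_num
    · right; simp [hv]; norm_num
  have h1 : (({![(1:ℝ)/3, 1/3, 1/3], ![(1:ℝ), 0, 0]} : Set (Fin 3 → ℝ)) ∩ u).Nonempty :=
    ⟨![(1:ℝ)/3, 1/3, 1/3], Or.inl rfl, by simp [hu]; norm_num⟩
  have h2 : (({![(1:ℝ)/3, 1/3, 1/3], ![(1:ℝ), 0, 0]} : Set (Fin 3 → ℝ)) ∩ v).Nonempty :=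
    ⟨![(1:ℝ), 0, 0], Or.inr rfl, by simp [hv]; norm_num⟩
  obtain ⟨x, _, hxu, hxv⟩ := hpc u v hou hov hcover h1 h2
  simp only [hu, hv, Set.mem_setOf_eq] at hxu hxv
  linarith
end
end

section
/- Let G₁ and G₂ be commutative monoids with a common finite generating set S, and suppose there is a surjective monoid homomorphism φ: G₁ → G₂ fixing S (as generators) whose kernel congruence is 'finite-index torsion', in the sense that whenever ∑ m_s·s = ∑ n_s·s in G₂ there exists k ≥ 1 with ∑ k·m_s·s = ∑ k·n_s·s in G₁. Then a probability distribution μ on S satisfies the centrality equations for G₁ if and only if it satisfies them for G₂. -/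
/-!
A relation `∑ mₛ • s = ∑ nₛ • s` in `G₁` maps to the same relation in `G₂`, so the centrality
equations of `G₂` include those of `G₁`. Conversely a relation in `G₂` holds in `G₁` after scaling
by some `k ≥ 1`; the centrality equation of `G₁` then gives `(∏ μₛ ^ mₛ) ^ k = (∏ μₛ ^ nₛ) ^ k`,
and `k`-th roots of nonnegative numbers are unique.
-/

def SatisfiesCentrality {G S R : Type*} [AddCommMonoid G] [Fintype S] [CommMonoid R]
    (gen : S → G) (μ : S → R) : Prop :=
  ∀ m n : S → ℕ, ∑ s, m s = ∑ s, n s →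
    ∑ s, m s • gen s = ∑ s, n s • gen s → ∏ s, μ s ^ m s = ∏ s, μ s ^ n s

section

variable {S R : Type*} [Fintype S]

theorem Finset.prod_pow_eq_prod_pow_of_mul [CommSemiring R] [LinearOrder R]
    [IsStrictOrderedRing R] {μ : S → R} (hμ : ∀ s, 0 ≤ μ s) {m n : S → ℕ} {k : ℕ} (hk : k ≠ 0)
    (h : ∏ s, μ s ^ (k * m s) = ∏ s, μ s ^ (k * n s)) :
    ∏ s, μ s ^ m s = ∏ s, μ s ^ n s := by
  simp only [pow_mul', Finset.prod_pow] at h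
  exact (pow_left_inj₀ (Finset.prod_nonneg fun s _ => pow_nonneg (hμ s) _)
    (Finset.prod_nonneg fun s _ => pow_nonneg (hμ s) _) hk).mp h

theorem AddMonoidHom.map_sum_nsmul_gen {G₁ G₂ : Type*} [AddCommMonoid G₁] [AddCommMonoid G₂]
    {gen₁ : S → G₁} {gen₂ : S → G₂} (φ : G₁ →+ G₂) (hφ : ∀ s, φ (gen₁ s) = gen₂ s)
    (m : S → ℕ) : φ (∑ s, m s • gen₁ s) = ∑ s, m s • gen₂ s := by
  simp only [map_sum, map_nsmul, hφ]

namespace SatisfiesCentrality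

variable {G₁ G₂ : Type*} [AddCommMonoid G₁] [AddCommMonoid G₂] {gen₁ : S → G₁} {gen₂ : S → G₂}

theorem of_map [CommMonoid R] {μ : S → R} (h : SatisfiesCentrality gen₂ μ) (φ : G₁ →+ G₂)
    (hφ : ∀ s, φ (gen₁ s) = gen₂ s) : SatisfiesCentrality gen₁ μ := by
  intro m n hmn hrel
  refine h m n hmn ?_
  rw [← φ.map_sum_nsmul_gen hφ, ← φ.map_sum_nsmul_gen hφ, hrel]

theorem of_torsion_relations [CommSemiring R] [LinearOrder R] [IsStrictOrderedRing R]
    {μ : S → R} (hμ : ∀ s, 0 ≤ μ s) (h : SatisfiesCentrality gen₁ μ)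
    (htor : ∀ m n : S → ℕ, ∑ s, m s • gen₂ s = ∑ s, n s • gen₂ s →
      ∃ k : ℕ, 1 ≤ k ∧ ∑ s, (k * m s) • gen₁ s = ∑ s, (k * n s) • gen₁ s) :
    SatisfiesCentrality gen₂ μ := by
  intro m n hmn hrel
  obtain ⟨k, hk, hrel₁⟩ := htor m n hrel
  have hmn₁ : ∑ s, k * m s = ∑ s, k * n s := by rw [← Finset.mul_sum, ← Finset.mul_sum, hmn]
  exact Finset.prod_pow_eq_prod_pow_of_mul hμ (by omega) (h _ _ hmn₁ hrel₁)

end SatisfiesCentrality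

end

theorem centrality_iff_of_torsion_quotient_general (G₁ G₂ : Type*)
    [AddCommMonoid G₁] [AddCommMonoid G₂]
    (S : Type*) [Fintype S] (gen₁ : S → G₁) (gen₂ : S → G₂)
    (φ : G₁ →+ G₂)
    (hφgen : ∀ s, φ (gen₁ s) = gen₂ s)
    (htor : ∀ m n : S → ℕ, ∑ s, m s • gen₂ s = ∑ s, n s • gen₂ s →
      ∃ k : ℕ, 1 ≤ k ∧ ∑ s, (k * m s) • gen₁ s = ∑ s, (k * n s) • gen₁ s)
    (μ : S → ℝ) (hpos : ∀ s, 0 ≤ μ s) :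
    (∀ m n : S → ℕ, ∑ s, m s = ∑ s, n s →
        ∑ s, m s • gen₁ s = ∑ s, n s • gen₁ s →
        ∏ s, μ s ^ m s = ∏ s, μ s ^ n s) ↔
    (∀ m n : S → ℕ, ∑ s, m s = ∑ s, n s →
        ∑ s, m s • gen₂ s = ∑ s, n s • gen₂ s →
        ∏ s, μ s ^ m s = ∏ s, μ s ^ n s) :=
  ⟨fun h => SatisfiesCentrality.of_torsion_relations hpos h htor,
    fun h => SatisfiesCentrality.of_map h φ hφgen⟩

/-- if `φ : G₁ → G₂` is a surjective homomorphism of commutative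
monoids carrying a common finite generating set `S` to itself, whose kernel
congruence is "finite-index torsion" (relations in `G₂` hold in `G₁` after
multiplication by some `k ≥ 1`), then a probability distribution `μ` on `S`
satisfies the centrality equations for `G₁` iff it does for `G₂`. -/
theorem centrality_iff_of_torsion_quotient (G₁ G₂ : Type*)
    [AddCommMonoid G₁] [AddCommMonoid G₂]
    (S : Type*) [Fintype S] (gen₁ : S → G₁) (gen₂ : S → G₂)
    (hgen₁ : AddSubmonoid.closure (Set.range gen₁) = ⊤)
    (hgen₂ : AddSubmonoid.closure (Set.range gen₂) = ⊤)
    (φ : G₁ →+ G₂) (hφsurj : Function.Surjective φ)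
    (hφgen : ∀ s, φ (gen₁ s) = gen₂ s)
    (htor : ∀ m n : S → ℕ, ∑ s, m s • gen₂ s = ∑ s, n s • gen₂ s →
      ∃ k : ℕ, 1 ≤ k ∧ ∑ s, (k * m s) • gen₁ s = ∑ s, (k * n s) • gen₁ s)
    (μ : S → ℝ) (hpos : ∀ s, 0 ≤ μ s) (hsum : ∑ s, μ s = 1) :
    (∀ m n : S → ℕ, ∑ s, m s = ∑ s, n s →
        ∑ s, m s • gen₁ s = ∑ s, n s • gen₁ s →
        ∏ s, μ s ^ m s = ∏ s, μ s ^ n s) ↔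
    (∀ m n : S → ℕ, ∑ s, m s = ∑ s, n s →
        ∑ s, m s • gen₂ s = ∑ s, n s • gen₂ s →
        ∏ s, μ s ^ m s = ∏ s, μ s ^ n s) :=
  centrality_iff_of_torsion_quotient_general G₁ G₂ S gen₁ gen₂ φ hφgen htor μ hpos
end

section
/- For G = ℤ² with generating set S = {(1,0),(−1,0),(0,1),(0,−1)}, a probability distribution (x₁,x₂,x₃,x₄) on S (x_i ≥ 0, ∑x_i = 1) satisfies all centrality equations if and only if x₁x₂ = x₃x₄; consequently the solution set is homeomorphic to a closed 2-dimensional disk. -/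
/-!
The centrality equations compare monomials whose exponent vectors have the same total degree and
the same image in `ℤ²`; two such vectors differ by a multiple of `(1, 1, -1, -1)`, so all equations
follow from the single one `x₀ x₁ = x₂ x₃`. On the probability simplex, the solution set maps
bijectively onto the diamond `|u| + |v| ≤ 1` under `x ↦ (x₀ - x₁, x₂ - x₃)`, and the diamond, being
a compact convex body in the plane, is homeomorphic to the closed disk.
-/

open Metric Set

section Centrality

variable {M : Type*} [CommMonoid M]

def SatisfiesCentralityEquations (x : Fin 4 → M) : Prop :=
  ∀ m n : Fin 4 → ℕ, ∑ i, m i = ∑ i, n i →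
    (m 0 : ℤ) - (m 1 : ℤ) = (n 0 : ℤ) - (n 1 : ℤ) →
    (m 2 : ℤ) - (m 3 : ℤ) = (n 2 : ℤ) - (n 3 : ℤ) →
    ∏ i, x i ^ m i = ∏ i, x i ^ n i

theorem prod_pow_eq_prod_pow_of_le {x : Fin 4 → M} (hx : x 0 * x 1 = x 2 * x 3)
    {m n : Fin 4 → ℕ} (hs : ∑ i, m i = ∑ i, n i)
    (h01 : (m 0 : ℤ) - (m 1 : ℤ) = (n 0 : ℤ) - (n 1 : ℤ))
    (h23 : (m 2 : ℤ) - (m 3 : ℤ) = (n 2 : ℤ) - (n 3 : ℤ)) (hle : n 0 ≤ m 0) :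
    ∏ i, x i ^ m i = ∏ i, x i ^ n i := by
  rw [Fin.sum_univ_four, Fin.sum_univ_four] at hs
  obtain ⟨k, hm0, hm1, hn2, hn3⟩ :
      ∃ k, m 0 = n 0 + k ∧ m 1 = n 1 + k ∧ n 2 = m 2 + k ∧ n 3 = m 3 + k :=
    ⟨m 0 - n 0, by omega⟩
  simp only [Fin.prod_univ_four, hm0, hm1, hn2, hn3, pow_add]
  calc x 0 ^ n 0 * x 0 ^ k * (x 1 ^ n 1 * x 1 ^ k) * x 2 ^ m 2 * x 3 ^ m 3
      = x 0 ^ n 0 * x 1 ^ n 1 * x 2 ^ m 2 * x 3 ^ m 3 * (x 0 * x 1) ^ k := by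
        rw [mul_pow]; ac_rfl
    _ = x 0 ^ n 0 * x 1 ^ n 1 * (x 2 ^ m 2 * x 2 ^ k) * (x 3 ^ m 3 * x 3 ^ k) := by
        rw [hx, mul_pow]; ac_rfl

theorem satisfiesCentralityEquations_iff {x : Fin 4 → M} :
    SatisfiesCentralityEquations x ↔ x 0 * x 1 = x 2 * x 3 := by
  refine ⟨fun h => ?_, fun hx m n hs h01 h23 => ?_⟩
  · simpa [Fin.prod_univ_four] using h ![1, 1, 0, 0] ![0, 0, 1, 1] rfl rfl rfl
  · rcases le_total (n 0) (m 0) with hle | hle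
    · exact prod_pow_eq_prod_pow_of_le hx hs h01 h23 hle
    · exact (prod_pow_eq_prod_pow_of_le hx hs.symm h01.symm h23.symm hle).symm

end Centrality

theorem Convex.nonempty_homeomorph_closedBall {E : Type*} [NormedAddCommGroup E]
    [NormedSpace ℝ E] {s : Set E} (hc : Convex ℝ s) (hcl : IsClosed s)
    (hne : (interior s).Nonempty) (hb : Bornology.IsBounded s) :
    Nonempty (s ≃ₜ closedBall (0 : E) 1) := by
  obtain ⟨h, -, hclosure, -⟩ :=
    exists_homeomorph_image_interior_closure_frontier_eq_unitBall hc hne hb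
  rw [hcl.closure_eq] at hclosure
  exact ⟨(h.image s).trans (Homeomorph.setCongr hclosure)⟩

section

local notation "ℝ²" => EuclideanSpace ℝ (Fin 2)

theorem sq_le_one_add_sq_of_abs_add_abs_le {a b : ℝ} (h : |a| + |b| ≤ 1) :
    b ^ 2 ≤ (1 + a) ^ 2 :=
  sq_le_sq' (by linarith [neg_abs_le a, neg_abs_le b]) (by linarith [neg_abs_le a, le_abs_self b])

def diamond : Set ℝ² := {p | |p 0| + |p 1| ≤ 1}

theorem isClosed_diamond : IsClosed diamond :=
  isClosed_le (by fun_prop) continuous_const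

theorem convex_diamond : Convex ℝ diamond := by
  intro p hp q hq a b ha hb hab
  simp only [diamond, mem_ofPred_eq, PiLp.add_apply, PiLp.smul_apply, smul_eq_mul] at hp hq ⊢
  calc |a * p 0 + b * q 0| + |a * p 1 + b * q 1|
      ≤ (|a * p 0| + |b * q 0|) + (|a * p 1| + |b * q 1|) :=
        add_le_add (abs_add_le _ _) (abs_add_le _ _)
    _ = a * (|p 0| + |p 1|) + b * (|q 0| + |q 1|) := by
        simp only [abs_mul, abs_of_nonneg ha, abs_of_nonneg hb]; ring
    _ ≤ 1 := by nlinarith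

theorem isBounded_diamond : Bornology.IsBounded diamond := by
  refine (isBounded_closedBall (x := (0 : ℝ²)) (r := 1)).subset
    fun p (hp : |p 0| + |p 1| ≤ 1) => ?_
  rw [mem_closedBall_zero_iff, ← sq_le_one_iff₀ (norm_nonneg p), EuclideanSpace.real_norm_sq_eq,
    Fin.sum_univ_two]
  nlinarith [abs_nonneg (p 0), abs_nonneg (p 1), sq_abs (p 0), sq_abs (p 1)]

theorem zero_mem_interior_diamond : (0 : ℝ²) ∈ interior diamond := by
  refine mem_interior.2 ⟨{p | |p 0| + |p 1| < 1}, fun p hp => le_of_lt (α := ℝ) hp,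
    isOpen_lt (by fun_prop) continuous_const, ?_⟩
  simp

def centralitySolutions : Set (Fin 4 → ℝ) :=
  {y | (∀ i, 0 ≤ y i) ∧ ∑ i, y i = 1 ∧ y 0 * y 1 = y 2 * y 3}

def toDiamond (y : Fin 4 → ℝ) : ℝ² := !₂[y 0 - y 1, y 2 - y 3]

-- For `(u, v) = toDiamond y` and `s = y₀ + y₁` we have `4 y₀ y₁ = s² - u²` and
-- `4 y₂ y₃ = (1 - s)² - v²`, so on `centralitySolutions` necessarily `s = (1 + u² - v²) / 2`.
noncomputable def ofDiamond (p : ℝ²) : Fin 4 → ℝ :=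
  ![((1 + p 0) ^ 2 - p 1 ^ 2) / 4, ((1 - p 0) ^ 2 - p 1 ^ 2) / 4,
    ((1 + p 1) ^ 2 - p 0 ^ 2) / 4, ((1 - p 1) ^ 2 - p 0 ^ 2) / 4]

theorem continuous_toDiamond : Continuous toDiamond :=
  (PiLp.continuous_toLp 2 _).comp (by fun_prop)

theorem continuous_ofDiamond : Continuous ofDiamond := by
  unfold ofDiamond
  fun_prop

theorem toDiamond_mem {y : Fin 4 → ℝ} (hy : y ∈ centralitySolutions) :
    toDiamond y ∈ diamond := by
  obtain ⟨hpos, hsum, -⟩ := hy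
  rw [Fin.sum_univ_four] at hsum
  have h01 : |y 0 - y 1| ≤ y 0 + y 1 := abs_sub_le_of_nonneg_of_le (hpos 0)
    (le_add_of_nonneg_right (hpos 1)) (hpos 1) (le_add_of_nonneg_left (hpos 0))
  have h23 : |y 2 - y 3| ≤ y 2 + y 3 := abs_sub_le_of_nonneg_of_le (hpos 2)
    (le_add_of_nonneg_right (hpos 3)) (hpos 3) (le_add_of_nonneg_left (hpos 2))
  change |y 0 - y 1| + |y 2 - y 3| ≤ 1
  linarith

theorem ofDiamond_mem {p : ℝ²} (hp : p ∈ diamond) : ofDiamond p ∈ centralitySolutions := by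
  have h : |p 0| + |p 1| ≤ 1 := hp
  have h' : |p 1| + |p 0| ≤ 1 := by rwa [add_comm]
  have h_neg : |-p 0| + |p 1| ≤ 1 := by rwa [abs_neg]
  have h_neg' : |-p 1| + |p 0| ≤ 1 := by rwa [abs_neg]
  refine ⟨fun i => ?_, ?_, ?_⟩
  · fin_cases i <;> refine div_nonneg (sub_nonneg.2 ?_) zero_le_four
    · exact sq_le_one_add_sq_of_abs_add_abs_le h
    · simpa only [sub_eq_add_neg] using sq_le_one_add_sq_of_abs_add_abs_le h_neg
    · exact sq_le_one_add_sq_of_abs_add_abs_le h'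
    · simpa only [sub_eq_add_neg] using sq_le_one_add_sq_of_abs_add_abs_le h_neg'
  · simp only [ofDiamond, Fin.sum_univ_four, Matrix.cons_val_zero, Matrix.cons_val_one,
      Matrix.cons_val]
    ring
  · simp only [ofDiamond, Matrix.cons_val_zero, Matrix.cons_val_one, Matrix.cons_val]
    ring

theorem toDiamond_ofDiamond (p : ℝ²) : toDiamond (ofDiamond p) = p := by
  ext i
  fin_cases i <;>
    simp only [toDiamond, ofDiamond, Matrix.cons_val_zero, Matrix.cons_val_one, Matrix.cons_val,
      Fin.zero_eta, Fin.mk_one, Matrix.cons_val_fin_one] <;>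
    ring

theorem ofDiamond_toDiamond {y : Fin 4 → ℝ} (hy : y ∈ centralitySolutions) :
    ofDiamond (toDiamond y) = y := by
  obtain ⟨-, hsum, hprod⟩ := hy
  rw [Fin.sum_univ_four] at hsum
  ext i
  fin_cases i <;>
    simp only [ofDiamond, toDiamond, Matrix.cons_val_zero, Matrix.cons_val_one, Matrix.cons_val,
      Matrix.cons_val_fin_one, Fin.zero_eta, Fin.mk_one, Fin.reduceFinMk]
  · linear_combination ((y 0 + y 1 - y 2 - y 3 - 1) / 4) * hsum - hprod
  · linear_combination ((y 0 + y 1 - y 2 - y 3 - 1) / 4) * hsum - hprod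
  · linear_combination ((y 2 + y 3 - y 0 - y 1 - 1) / 4) * hsum + hprod
  · linear_combination ((y 2 + y 3 - y 0 - y 1 - 1) / 4) * hsum + hprod

noncomputable def centralitySolutionsHomeomorphDiamond : centralitySolutions ≃ₜ diamond where
  toFun y := ⟨toDiamond y, toDiamond_mem y.2⟩
  invFun p := ⟨ofDiamond p, ofDiamond_mem p.2⟩
  left_inv y := Subtype.ext (ofDiamond_toDiamond y.2)
  right_inv p := Subtype.ext (toDiamond_ofDiamond p)
  continuous_toFun := (continuous_toDiamond.comp continuous_subtype_val).subtype_mk _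
  continuous_invFun := (continuous_ofDiamond.comp continuous_subtype_val).subtype_mk _

end

theorem absolute_Z2_standard_generators_general (x : Fin 4 → ℝ) :
    ((∀ m n : Fin 4 → ℕ, ∑ i, m i = ∑ i, n i →
        (m 0 : ℤ) - (m 1 : ℤ) = (n 0 : ℤ) - (n 1 : ℤ) →
        (m 2 : ℤ) - (m 3 : ℤ) = (n 2 : ℤ) - (n 3 : ℤ) →
        ∏ i, x i ^ m i = ∏ i, x i ^ n i) ↔ x 0 * x 1 = x 2 * x 3) ∧
    Nonempty
      (↥{y : Fin 4 → ℝ | (∀ i, 0 ≤ y i) ∧ ∑ i, y i = 1 ∧ y 0 * y 1 = y 2 * y 3} ≃ₜ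
        ↥(Metric.closedBall (0 : EuclideanSpace ℝ (Fin 2)) 1)) := by
  obtain ⟨diamondHomeomorphBall⟩ := convex_diamond.nonempty_homeomorph_closedBall
    isClosed_diamond ⟨0, zero_mem_interior_diamond⟩ isBounded_diamond
  exact ⟨satisfiesCentralityEquations_iff,
    ⟨centralitySolutionsHomeomorphDiamond.trans diamondHomeomorphBall⟩⟩

/-- for `G = ℤ²` with generators `(1,0), (-1,0), (0,1), (0,-1)`, a
probability distribution `x` on the four generators satisfies all centrality
equations iff `x₁x₂ = x₃x₄`; consequently the solution set is homeomorphic to a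
closed 2-dimensional disk. -/
theorem absolute_Z2_standard_generators (x : Fin 4 → ℝ)
    (hx : ∀ i, 0 ≤ x i) (hsum : ∑ i, x i = 1) :
    ((∀ m n : Fin 4 → ℕ, ∑ i, m i = ∑ i, n i →
        (m 0 : ℤ) - (m 1 : ℤ) = (n 0 : ℤ) - (n 1 : ℤ) →
        (m 2 : ℤ) - (m 3 : ℤ) = (n 2 : ℤ) - (n 3 : ℤ) →
        ∏ i, x i ^ m i = ∏ i, x i ^ n i) ↔ x 0 * x 1 = x 2 * x 3) ∧
    Nonempty
      (↥{y : Fin 4 → ℝ | (∀ i, 0 ≤ y i) ∧ ∑ i, y i = 1 ∧ y 0 * y 1 = y 2 * y 3} ≃ₜ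
        ↥(Metric.closedBall (0 : EuclideanSpace ℝ (Fin 2)) 1)) :=
  absolute_Z2_standard_generators_general x
end
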